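/- arXiv:2108.13145 — 11 statements merged into one kernel-verified Lean document; each statement's English description precedes it below -/
import Mathlib

section
/- (The f=h reciprocity for simplicial complexes.) Let Δ be a simplicial complex of dimension d−1 with h-numbers h_0, …, h_d. Then the polynomial identity ∑_{i=0}^d h_i (1+x)^i x^{d−i} = ∑_{F ∈ Δ} m_F x^{|F|} holds in ℤ[x], where m_F = ∑_{G ∈ Δ, F ⊆ G} (−1)^{d−|G|}. (Equivalently, x^d · h̃((x+1)/x) enumerates the faces of Δ with multiplicity m_F.) -/
open Polynomial Finset

/-- A (finite, abstract) simplicial complex: a finite collection of finite subsets of `V`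
containing the empty set and closed under taking subsets. -/
def IsSimplicialComplex {V : Type*} [DecidableEq V] (Δ : Finset (Finset V)) : Prop :=
  ∅ ∈ Δ ∧ ∀ F ∈ Δ, ∀ G ⊆ F, G ∈ Δ

/-- `Δ` has dimension `d - 1`: every face has at most `d` elements and some face has
exactly `d` elements. -/
def HasDimension {V : Type*} [DecidableEq V] (Δ : Finset (Finset V)) (d : ℕ) : Prop :=
  (∀ F ∈ Δ, F.card ≤ d) ∧ ∃ F ∈ Δ, F.card = d

/-- `fnum Δ i` is the number of faces of `Δ` with exactly `i` elements, i.e. `f_{i-1}`. -/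
def fnum {V : Type*} [DecidableEq V] (Δ : Finset (Finset V)) (i : ℕ) : ℕ :=
  (Δ.filter fun F => F.card = i).card

/-- The multiplicity `m_F = ∑_{G ∈ Δ, F ⊆ G} (−1)^{d−|G|}` of a face `F` of a complex of
dimension `d − 1` (all faces `G` satisfy `|G| ≤ d`, so `d - G.card` is the usual subtraction). -/
def mult {V : Type*} [DecidableEq V] (Δ : Finset (Finset V)) (d : ℕ) (F : Finset V) : ℤ :=
  ∑ G ∈ Δ.filter (fun G => F ⊆ G), (-1 : ℤ) ^ (d - G.card)

/-- The reduced Euler characteristic `χ̃(Γ) = ∑_{G ∈ Γ} (−1)^{|G|−1}`; the exponent is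
written `|G| + 1`, which has the same parity as `|G| − 1` (the empty face contributes `−1`). -/
def chiTilde {V : Type*} [DecidableEq V] (Γ : Finset (Finset V)) : ℤ :=
  ∑ G ∈ Γ, (-1 : ℤ) ^ (G.card + 1)

/-- The link of a face `F` in `Δ`. -/
def link {V : Type*} [DecidableEq V] (Δ : Finset (Finset V)) (F : Finset V) :
    Finset (Finset V) :=
  Δ.filter fun G => G ∩ F = ∅ ∧ G ∪ F ∈ Δ

/-- `Δ` (of dimension `d − 1`) is reciprocal if `m_F ∈ {0, 1}` for every nonempty face. -/
def IsReciprocal {V : Type*} [DecidableEq V] (Δ : Finset (Finset V)) (d : ℕ) : Prop :=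
  ∀ F ∈ Δ, F ≠ ∅ → mult Δ d F = 0 ∨ mult Δ d F = 1

/-- `Δ` (of dimension `d − 1`) is semi-Eulerian if `m_F = 1` for every nonempty face. -/
def IsSemiEulerian {V : Type*} [DecidableEq V] (Δ : Finset (Finset V)) (d : ℕ) : Prop :=
  ∀ F ∈ Δ, F ≠ ∅ → mult Δ d F = 1

/-- `fint Δ d i` is the number of interior faces (nonempty faces with `m_F = 1`) of `Δ`
with exactly `i` elements, i.e. `f^int_{i-1}`. -/
def fint {V : Type*} [DecidableEq V] (Δ : Finset (Finset V)) (d : ℕ) (i : ℕ) : ℕ :=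
  (Δ.filter fun F => F.card = i ∧ F ≠ ∅ ∧ mult Δ d F = 1).card

/-! Homogenizing the defining identity `∑ hᵢ xⁱ = ∑ f_{i-1} xⁱ (1 - x)^{d-i}` in degree `d`
gives `∑ hᵢ uⁱ v^{d-i} = ∑ f_{i-1} uⁱ (v - u)^{d-i}`. At `u = 1 + x`, `v = x` the right side is
`∑_{G ∈ Δ} (-1)^{d-|G|} (1 + x)^{|G|}`; expanding `(1 + x)^{|G|} = ∑_{F ⊆ G} x^{|F|}` and
exchanging the sums, which needs `Δ` to be closed under subsets, collects the coefficient `m_F`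
at `x^{|F|}`. -/

namespace Polynomial

variable {R : Type*} [CommRing R]

lemma homogenize_pow (p : R[X]) {n : ℕ} (hp : p.natDegree ≤ n) (k : ℕ) :
    homogenize (p ^ k) (k * n) = homogenize p n ^ k := by
  simpa using homogenize_finsetProd (s := range k) (p := fun _ ↦ p) (n := fun _ ↦ n)
    (fun _ _ ↦ hp)

lemma aeval_homogenize_X_pow_mul_one_sub_X_pow {A : Type*} [CommRing A] [Algebra R A]
    (u v : A) (i j : ℕ) :
    MvPolynomial.aeval ![u, v] (homogenize (X ^ i * (1 - X) ^ j : R[X]) (i + j)) =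
      u ^ i * (v - u) ^ j := by
  have hdeg : (1 - X : R[X]).natDegree ≤ 1 :=
    (natDegree_sub_le _ _).trans (by simpa using natDegree_X_le)
  have hpow := homogenize_pow _ hdeg j
  rw [mul_one] at hpow
  rw [homogenize_mul _ _ (natDegree_X_pow_le i)
      ((natDegree_pow_le_of_le j hdeg).trans_eq (mul_one j)),
    hpow, homogenize_sub, homogenize_one, homogenize_X one_ne_zero]
  simp

lemma sum_mul_pow_mul_pow_eq_of_eq {A : Type*} [CommRing A] [Algebra R A] {d : ℕ}
    {a b : ℕ → R}
    (hab : ∑ i ∈ range (d + 1), C (a i) * X ^ i =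
      ∑ i ∈ range (d + 1), C (b i) * X ^ i * (1 - X) ^ (d - i))
    (u v : A) :
    ∑ i ∈ range (d + 1), algebraMap R A (a i) * u ^ i * v ^ (d - i) =
      ∑ i ∈ range (d + 1), algebraMap R A (b i) * u ^ i * (v - u) ^ (d - i) := by
  have := congrArg (fun p ↦ MvPolynomial.aeval ![u, v] (homogenize p d)) hab
  simp only [homogenize_finsetSum, map_sum] at this
  convert this using 2 with i hi i hi <;> symm
  · rw [homogenize_C_mul, homogenize_X_pow (Nat.lt_succ_iff.1 (mem_range.1 hi))]
    simp [mul_assoc]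
  · rw [mul_assoc, homogenize_C_mul, ← Nat.add_sub_of_le (Nat.lt_succ_iff.1 (mem_range.1 hi)),
      map_mul, Nat.add_sub_cancel_left, aeval_homogenize_X_pow_mul_one_sub_X_pow]
    simp [mul_assoc]

end Polynomial

section Faces

variable {V : Type*} [DecidableEq V]

lemma sum_range_fnum_nsmul {M : Type*} [AddCommMonoid M] {Δ : Finset (Finset V)} {d : ℕ}
    (hcard : ∀ F ∈ Δ, F.card ≤ d) (g : ℕ → M) :
    ∑ i ∈ range (d + 1), fnum Δ i • g i = ∑ G ∈ Δ, g G.card := by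
  rw [← sum_fiberwise_of_maps_to (g := card) (t := range (d + 1))
    fun G hG ↦ mem_range.2 (Nat.lt_succ_of_le (hcard G hG))]
  refine sum_congr rfl fun i _ ↦ ?_
  rw [fnum, ← sum_const]
  exact sum_congr rfl fun G hG ↦ by rw [(mem_filter.1 hG).2]

lemma sum_sum_powerset_eq_sum_sum_filter_superset {M : Type*} [AddCommMonoid M]
    {Δ : Finset (Finset V)} (hclosed : ∀ G ∈ Δ, ∀ F ⊆ G, F ∈ Δ)
    (φ : Finset V → Finset V → M) :
    ∑ G ∈ Δ, ∑ F ∈ G.powerset, φ F G = ∑ F ∈ Δ, ∑ G ∈ Δ.filter (F ⊆ ·), φ F G := by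
  refine sum_comm' fun G F ↦ ?_
  simp only [mem_powerset, mem_filter]
  exact ⟨fun ⟨hG, hFG⟩ ↦ ⟨⟨hG, hFG⟩, hclosed G hG F hFG⟩, fun ⟨⟨hG, hFG⟩, _⟩ ↦ ⟨hG, hFG⟩⟩

lemma sum_C_mult_mul_X_pow {Δ : Finset (Finset V)} (hclosed : ∀ G ∈ Δ, ∀ F ⊆ G, F ∈ Δ)
    (d : ℕ) :
    ∑ F ∈ Δ, C (mult Δ d F) * X ^ F.card =
      ∑ G ∈ Δ, C ((-1 : ℤ) ^ (d - G.card)) * (1 + X) ^ G.card := by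
  calc ∑ F ∈ Δ, C (mult Δ d F) * X ^ F.card
      = ∑ F ∈ Δ, ∑ G ∈ Δ.filter (F ⊆ ·), C ((-1 : ℤ) ^ (d - G.card)) * X ^ F.card := by
        simp only [mult, map_sum, sum_mul]
    _ = ∑ G ∈ Δ, ∑ F ∈ G.powerset, C ((-1 : ℤ) ^ (d - G.card)) * X ^ F.card :=
        (sum_sum_powerset_eq_sum_sum_filter_superset hclosed _).symm
    _ = ∑ G ∈ Δ, C ((-1 : ℤ) ^ (d - G.card)) * (1 + X) ^ G.card := by
        refine sum_congr rfl fun G _ ↦ ?_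
        rw [← mul_sum, add_comm, ← sum_pow_mul_eq_add_pow]
        simp

end Faces

theorem fh_reciprocity_general {V : Type*} [DecidableEq V] (Δ : Finset (Finset V)) (d : ℕ)
    (hΔ : IsSimplicialComplex Δ) (hdim : HasDimension Δ d)
    (h : ℕ → ℤ)
    (hh : (∑ i ∈ range (d + 1), C (h i) * X ^ i : Polynomial ℤ)
        = ∑ i ∈ range (d + 1), C ((fnum Δ i : ℤ)) * X ^ i * (1 - X) ^ (d - i)) :
    (∑ i ∈ range (d + 1), C (h i) * (1 + X) ^ i * X ^ (d - i) : Polynomial ℤ)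
      = ∑ F ∈ Δ, C (mult Δ d F) * X ^ F.card := by
  have homogenized := sum_mul_pow_mul_pow_eq_of_eq hh (1 + X : ℤ[X]) X
  simp only [algebraMap_eq] at homogenized
  calc (∑ i ∈ range (d + 1), C (h i) * (1 + X) ^ i * X ^ (d - i) : ℤ[X])
      = ∑ i ∈ range (d + 1), fnum Δ i • (C ((-1 : ℤ) ^ (d - i)) * (1 + X) ^ i) := by
        rw [homogenized]
        refine sum_congr rfl fun i _ ↦ ?_
        simp only [nsmul_eq_mul, map_pow, map_neg, map_one, map_natCast]
        ring
    _ = ∑ G ∈ Δ, C ((-1 : ℤ) ^ (d - G.card)) * (1 + X) ^ G.card :=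
        sum_range_fnum_nsmul hdim.1 _
    _ = ∑ F ∈ Δ, C (mult Δ d F) * X ^ F.card := (sum_C_mult_mul_X_pow hΔ.2 d).symm

/-- The f = h reciprocity: `∑ h_i (1+x)^i x^{d−i} = ∑_{F ∈ Δ} m_F x^{|F|}`. -/
theorem fh_reciprocity {V : Type*} [DecidableEq V] (Δ : Finset (Finset V)) (d : ℕ)
    (hd : 1 ≤ d) (hΔ : IsSimplicialComplex Δ) (hdim : HasDimension Δ d)
    (h : ℕ → ℤ)
    (hh : (∑ i ∈ range (d + 1), C (h i) * X ^ i : Polynomial ℤ)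
        = ∑ i ∈ range (d + 1), C ((fnum Δ i : ℤ)) * X ^ i * (1 - X) ^ (d - i)) :
    (∑ i ∈ range (d + 1), C (h i) * (1 + X) ^ i * X ^ (d - i) : Polynomial ℤ)
      = ∑ F ∈ Δ, C (mult Δ d F) * X ^ F.card :=
  fh_reciprocity_general Δ d hΔ hdim h hh
end

section
/- (Polynomial Dehn–Sommerville relation for reciprocal complexes, f-version.) Let Δ be a reciprocal simplicial complex of dimension d−1. Then the polynomial identity (−1)^d · ∑_{i=0}^d f_{i−1} x^i = ∑_{i=1}^d f^int_{i−1} (−x−1)^i + m_∅ holds in ℤ[x], where m_∅ = ∑_{G ∈ Δ} (−1)^{d−|G|} = (−1)^{d−1} χ̃(Δ). -/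
open Polynomial Finset

/-!
Expanding `m_F` and swapping the sums gives, for any `y`,
`∑_{F ∈ Δ} m_F y^{|F|} = ∑_{G ∈ Δ} (−1)^{d−|G|} (y + 1)^{|G|}`, because the faces of `Δ`
contained in `G` are all subsets of `G`. At `y = −x − 1` the right side is
`(−1)^d ∑_{G ∈ Δ} x^{|G|}`. Reciprocity says that on the left each nonempty face contributes
`y^{|F|}` if it is interior and nothing otherwise, and the empty face contributes `m_∅`.
-/

lemma sum_card_filter_card_nsmul {V M : Type*} [AddCommMonoid M] {s : Finset (Finset V)}
    {t : Finset ℕ} (hs : ∀ G ∈ s, G.card ∈ t) (f : ℕ → M) :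
    ∑ i ∈ t, #{G ∈ s | G.card = i} • f i = ∑ G ∈ s, f G.card := by
  rw [← sum_fiberwise_of_maps_to hs]
  refine sum_congr rfl fun i _ => ?_
  rw [sum_congr rfl fun G hG => by rw [(mem_filter.mp hG).2], sum_const]

lemma sum_pow_card_powerset {V R : Type*} [CommSemiring R] (G : Finset V) (y : R) :
    ∑ F ∈ G.powerset, y ^ F.card = (y + 1) ^ G.card := by
  simpa using sum_pow_mul_eq_add_pow y 1 G

section

variable {V : Type*} [DecidableEq V]

def interiorFaces (Δ : Finset (Finset V)) (d : ℕ) : Finset (Finset V) :=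
  Δ.filter fun F => F ≠ ∅ ∧ mult Δ d F = 1

lemma sum_fnum_mul_pow {R : Type*} [Semiring R] {Δ : Finset (Finset V)} {d : ℕ}
    (hle : ∀ F ∈ Δ, F.card ≤ d) (y : R) :
    ∑ i ∈ range (d + 1), (fnum Δ i : R) * y ^ i = ∑ G ∈ Δ, y ^ G.card := by
  simp only [← nsmul_eq_mul]
  exact sum_card_filter_card_nsmul (fun G hG => mem_range_succ_iff.mpr (hle G hG)) _

lemma fint_eq_card_filter_interiorFaces (Δ : Finset (Finset V)) (d i : ℕ) :
    fint Δ d i = #{F ∈ interiorFaces Δ d | F.card = i} := by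
  rw [interiorFaces, filter_filter, fint]
  congr 1
  exact filter_congr fun F _ => by tauto

lemma sum_fint_mul_pow {R : Type*} [Semiring R] {Δ : Finset (Finset V)} {d : ℕ}
    (hle : ∀ F ∈ Δ, F.card ≤ d) (y : R) :
    ∑ i ∈ Icc 1 d, (fint Δ d i : R) * y ^ i = ∑ F ∈ interiorFaces Δ d, y ^ F.card := by
  simp only [← nsmul_eq_mul, fint_eq_card_filter_interiorFaces]
  refine sum_card_filter_card_nsmul (fun F hF => ?_) _
  obtain ⟨hFΔ, hFne, -⟩ := mem_filter.mp hF
  exact mem_Icc.mpr ⟨card_pos.mpr (nonempty_iff_ne_empty.mpr hFne), hle F hFΔ⟩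

lemma sum_mult_mul_pow {R : Type*} [CommRing R] {Δ : Finset (Finset V)}
    (hclosed : ∀ G ∈ Δ, ∀ F ⊆ G, F ∈ Δ) (d : ℕ) (y : R) :
    ∑ F ∈ Δ, (mult Δ d F : R) * y ^ F.card
      = ∑ G ∈ Δ, (-1 : R) ^ (d - G.card) * (y + 1) ^ G.card := by
  have hswap : ∑ F ∈ Δ, ∑ G ∈ Δ with F ⊆ G, (-1 : R) ^ (d - G.card) * y ^ F.card
      = ∑ G ∈ Δ, ∑ F ∈ G.powerset, (-1 : R) ^ (d - G.card) * y ^ F.card :=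
    sum_comm' fun F G => by
      simp only [mem_filter, mem_powerset]
      exact ⟨fun ⟨_, hG, hFG⟩ => ⟨hFG, hG⟩, fun ⟨hFG, hG⟩ => ⟨hclosed G hG F hFG, hG, hFG⟩⟩
  simp only [mult, Int.cast_sum, Int.cast_pow, Int.cast_neg, Int.cast_one, sum_mul, hswap,
    ← mul_sum, sum_pow_card_powerset]

lemma sum_mult_mul_neg_sub_one_pow {R : Type*} [CommRing R] {Δ : Finset (Finset V)} {d : ℕ}
    (hclosed : ∀ G ∈ Δ, ∀ F ⊆ G, F ∈ Δ) (hle : ∀ F ∈ Δ, F.card ≤ d) (x : R) :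
    ∑ F ∈ Δ, (mult Δ d F : R) * (-x - 1) ^ F.card = (-1) ^ d * ∑ G ∈ Δ, x ^ G.card := by
  rw [sum_mult_mul_pow hclosed, mul_sum]
  refine sum_congr rfl fun G hG => ?_
  rw [sub_add_cancel, neg_pow x, ← mul_assoc, ← pow_add, Nat.sub_add_cancel (hle G hG)]

lemma sum_mult_mul_pow_of_isReciprocal {R : Type*} [CommRing R] {Δ : Finset (Finset V)}
    {d : ℕ} (hrec : IsReciprocal Δ d) (hempty : ∅ ∈ Δ) (y : R) :
    ∑ F ∈ Δ, (mult Δ d F : R) * y ^ F.card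
      = ∑ F ∈ interiorFaces Δ d, y ^ F.card + mult Δ d ∅ := by
  rw [← add_sum_erase Δ _ hempty, card_empty, pow_zero, mul_one, add_comm, interiorFaces,
    ← filter_filter, filter_ne', sum_filter]
  congr 1
  refine sum_congr rfl fun F hF => ?_
  obtain ⟨hFne, hFΔ⟩ := mem_erase.mp hF
  rcases hrec F hFΔ hFne with h | h <;> simp [h]

end

theorem polynomial_DS_reciprocal_general {V : Type*} [DecidableEq V] (Δ : Finset (Finset V)) (d : ℕ)
    (hΔ : IsSimplicialComplex Δ) (hdim : HasDimension Δ d)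
    (hrec : IsReciprocal Δ d) :
    C ((-1 : ℤ) ^ d) * (∑ i ∈ range (d + 1), C ((fnum Δ i : ℤ)) * X ^ i)
      = (∑ i ∈ Icc 1 d, C ((fint Δ d i : ℤ)) * (-X - 1) ^ i) + C (mult Δ d ∅) := by
  obtain ⟨hempty, hclosed⟩ := hΔ
  have hle := hdim.1
  simp only [eq_intCast, Int.cast_pow, Int.cast_neg, Int.cast_one, Int.cast_natCast]
  rw [sum_fnum_mul_pow hle, sum_fint_mul_pow hle, ← sum_mult_mul_neg_sub_one_pow hclosed hle,
    sum_mult_mul_pow_of_isReciprocal hrec hempty]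

/-- Polynomial Dehn–Sommerville relation for reciprocal complexes, f-version:
`(−1)^d ∑ f_{i−1} x^i = ∑_{i=1}^d f^int_{i−1} (−x−1)^i + m_∅`. -/
theorem polynomial_DS_reciprocal {V : Type*} [DecidableEq V] (Δ : Finset (Finset V)) (d : ℕ)
    (hd : 1 ≤ d) (hΔ : IsSimplicialComplex Δ) (hdim : HasDimension Δ d)
    (hrec : IsReciprocal Δ d) :
    C ((-1 : ℤ) ^ d) * (∑ i ∈ range (d + 1), C ((fnum Δ i : ℤ)) * X ^ i)
      = (∑ i ∈ Icc 1 d, C ((fint Δ d i : ℤ)) * (-X - 1) ^ i) + C (mult Δ d ∅) :=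
  polynomial_DS_reciprocal_general Δ d hΔ hdim hrec
end

section
/- (Dehn–Sommerville relations for reciprocal complexes, f-version.) Let Δ be a reciprocal simplicial complex of dimension d−1. Then for every k with 1 ≤ k ≤ d: f_{k−1} = ∑_{i=k}^d (−1)^{d−i} · binomial(i, k) · f^int_{i−1}. -/
open Finset

/-! By reciprocity, `m_F` is the indicator of `F` being interior for every nonempty face, so
the right-hand side is `∑_{F ≠ ∅} (-1)^(d-|F|) C(|F|,k) m_F`; the empty face contributes nothing
since `k ≥ 1`. Expanding `m_F` and exchanging the sums turns this into
`∑_{G ∈ Δ} (-1)^(d-|G|) ∑_{F ⊆ G} (-1)^(d-|F|) C(|F|,k)`, and binomial inversion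
`∑_{F ⊆ G} (-1)^|F| C(|F|,k) = (-1)^k [|G| = k]` leaves exactly the faces with `k` elements. -/

theorem Int.alternating_sum_range_choose_mul_choose (n k : ℕ) :
    ∑ j ∈ Finset.range (n + 1), (n.choose j : ℤ) * ((-1) ^ j * j.choose k)
      = if n = k then (-1) ^ k else 0 := by
  rcases lt_or_ge n k with hnk | hkn
  · rw [if_neg hnk.ne]
    refine sum_eq_zero fun j hj => ?_
    have hjk : j < k := by grind
    simp [Nat.choose_eq_zero_of_lt hjk]
  obtain ⟨m, rfl⟩ := Nat.exists_eq_add_of_le hkn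
  have hlow : ∑ j ∈ Finset.range k, ((k + m).choose j : ℤ) * ((-1) ^ j * j.choose k) = 0 :=
    sum_eq_zero fun j hj => by simp [Nat.choose_eq_zero_of_lt (Finset.mem_range.1 hj)]
  have hshift : ∀ t ∈ Finset.range (m + 1),
      ((k + m).choose (k + t) : ℤ) * ((-1) ^ (k + t) * (k + t).choose k)
        = (-1) ^ k * (k + m).choose k * ((-1) ^ t * m.choose t) := by
    intro t _
    have h := Nat.choose_mul (n := k + m) (k := k + t) (s := k) (Nat.le_add_right k t)
    rw [Nat.add_sub_cancel_left, Nat.add_sub_cancel_left] at h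
    rw [pow_add]
    linear_combination (-1 : ℤ) ^ k * (-1) ^ t * (by exact_mod_cast h :
      ((k + m).choose (k + t) : ℤ) * (k + t).choose k = (k + m).choose k * m.choose t)
  rw [add_assoc, sum_range_add, hlow, sum_congr rfl hshift, ← mul_sum,
    Int.alternating_sum_range_choose]
  by_cases hm : m = 0 <;> simp [hm]

theorem Finset.sum_powerset_neg_one_pow_card_mul_choose {α : Type*} (s : Finset α) (k : ℕ) :
    ∑ t ∈ s.powerset, (-1 : ℤ) ^ #t * (#t).choose k = if #s = k then (-1) ^ k else 0 := by
  rw [sum_powerset_apply_card (fun j => (-1 : ℤ) ^ j * j.choose k)]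
  exact Int.alternating_sum_range_choose_mul_choose _ _

theorem neg_one_pow_tsub {R : Type*} [Monoid R] [HasDistribNeg R] {a n : ℕ} (h : a ≤ n) :
    (-1 : R) ^ (n - a) = (-1) ^ n * (-1) ^ a := by
  obtain ⟨m, rfl⟩ := Nat.exists_eq_add_of_le h
  rw [Nat.add_sub_cancel_left, pow_add, mul_assoc, ((Commute.neg_one_left _).pow_pow m a).eq,
    ← mul_assoc, ← pow_add, Even.neg_one_pow ⟨a, rfl⟩, one_mul]

section

variable {V : Type*} [DecidableEq V] {Δ : Finset (Finset V)} {d : ℕ}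

theorem sum_neg_one_pow_mul_choose_mul_mult_eq_fnum (hdown : ∀ F ∈ Δ, ∀ G ⊆ F, G ∈ Δ)
    (hcard : ∀ F ∈ Δ, #F ≤ d) (k : ℕ) :
    ∑ F ∈ Δ, (-1 : ℤ) ^ (d - #F) * (#F).choose k * mult Δ d F = fnum Δ k := by
  have hswap : ∑ F ∈ Δ, (-1 : ℤ) ^ (d - #F) * (#F).choose k * mult Δ d F
      = ∑ G ∈ Δ, ∑ F ∈ G.powerset, (-1 : ℤ) ^ (d - #F) * (#F).choose k * (-1) ^ (d - #G) := by
    simp_rw [mult, mul_sum]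
    refine sum_comm' fun F G => ?_
    simp only [mem_filter, mem_powerset]
    grind
  have hinner : ∀ G ∈ Δ,
      ∑ F ∈ G.powerset, (-1 : ℤ) ^ (d - #F) * (#F).choose k * (-1) ^ (d - #G)
        = if #G = k then 1 else 0 := by
    intro G hG
    have hsign : ∀ F ∈ G.powerset, (-1 : ℤ) ^ (d - #F) * (#F).choose k * (-1) ^ (d - #G)
        = (-1) ^ #G * ((-1) ^ #F * (#F).choose k) := by
      intro F hF
      have hsq : ((-1 : ℤ) ^ d) ^ 2 = 1 := by rw [← pow_mul, pow_mul', neg_one_sq, one_pow]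
      rw [neg_one_pow_tsub (hcard G hG),
        neg_one_pow_tsub (hcard F (hdown G hG F (mem_powerset.1 hF)))]
      linear_combination (-1 : ℤ) ^ #F * (#F).choose k * (-1) ^ #G * hsq
    rw [sum_congr rfl hsign, ← mul_sum, sum_powerset_neg_one_pow_card_mul_choose]
    split_ifs with h
    · rw [h, ← pow_add, Even.neg_one_pow ⟨k, rfl⟩]
    · rw [mul_zero]
  rw [hswap, sum_congr rfl hinner, sum_boole, fnum]

theorem sum_mul_fint_eq_sum_mul_mult (hrec : IsReciprocal Δ d) (hcard : ∀ F ∈ Δ, #F ≤ d)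
    (g : ℕ → ℤ) (hg : g 0 = 0) :
    ∑ i ∈ range (d + 1), g i * fint Δ d i = ∑ F ∈ Δ, g #F * mult Δ d F := by
  set I := Δ.filter fun F => F ≠ ∅ ∧ mult Δ d F = 1
  have hterm : ∀ F ∈ Δ,
      g #F * mult Δ d F = if F ≠ ∅ ∧ mult Δ d F = 1 then g #F else 0 := by
    intro F hF
    by_cases hF0 : F = ∅
    · simp [hF0, hg]
    · rcases hrec F hF hF0 with h | h <;> simp [hF0, h]
  have hfint : ∀ i, fint Δ d i = #{F ∈ I | #F = i} := by
    intro i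
    rw [fint, filter_filter]
    congr 1
    exact filter_congr fun F _ => by tauto
  rw [sum_congr rfl hterm, ← sum_filter,
    ← sum_fiberwise_of_maps_to (g := card) (t := range (d + 1)) fun F hF => ?_]
  · refine sum_congr rfl fun i _ => ?_
    rw [hfint, sum_congr rfl fun F hF => by rw [(mem_filter.1 hF).2], sum_const, nsmul_eq_mul,
      mul_comm]
  · exact mem_range.2 (Nat.lt_succ_of_le (hcard F (mem_filter.1 hF).1))

end

theorem DS_reciprocal_f_version_general {V : Type*} [DecidableEq V] (Δ : Finset (Finset V)) (d : ℕ)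
    (hΔ : IsSimplicialComplex Δ) (hdim : HasDimension Δ d)
    (hrec : IsReciprocal Δ d) :
    ∀ k, 1 ≤ k → k ≤ d →
      (fnum Δ k : ℤ)
        = ∑ i ∈ Icc k d, (-1 : ℤ) ^ (d - i) * (i.choose k : ℤ) * (fint Δ d i : ℤ) := by
  intro k hk _
  have hchoose : ∀ i < k, i.choose k = 0 := fun i => Nat.choose_eq_zero_of_lt
  rw [← sum_neg_one_pow_mul_choose_mul_mult_eq_fnum hΔ.2 hdim.1 k,
    ← sum_mul_fint_eq_sum_mul_mult hrec hdim.1 (fun i => (-1) ^ (d - i) * (i.choose k : ℤ))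
      (by simp [hchoose 0 hk])]
  refine (sum_subset (fun i hi => ?_) fun i _ hik => ?_).symm
  · grind
  · simp [hchoose i (by grind)]

/-- Dehn–Sommerville relations for reciprocal complexes, f-version:
`f_{k−1} = ∑_{i=k}^d (−1)^{d−i} C(i,k) f^int_{i−1}` for `1 ≤ k ≤ d`. -/
theorem DS_reciprocal_f_version {V : Type*} [DecidableEq V] (Δ : Finset (Finset V)) (d : ℕ)
    (hd : 1 ≤ d) (hΔ : IsSimplicialComplex Δ) (hdim : HasDimension Δ d)
    (hrec : IsReciprocal Δ d) :
    ∀ k, 1 ≤ k → k ≤ d →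
      (fnum Δ k : ℤ)
        = ∑ i ∈ Icc k d, (-1 : ℤ) ^ (d - i) * (i.choose k : ℤ) * (fint Δ d i : ℤ) :=
  DS_reciprocal_f_version_general Δ d hΔ hdim hrec
end

section
/- Let Δ be a reciprocal simplicial complex of dimension d−1. Then χ(Δ) = (−1)^{d−1} χ(Δ^int), i.e., ∑_{i=1}^d (−1)^{i−1} f_{i−1} = (−1)^{d−1} · ∑_{i=1}^d (−1)^{i−1} f^int_{i−1}. -/
open Polynomial Finset

private lemma sum_sign_card_aux {V : Type*} [DecidableEq V] (d : ℕ)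
    (S : Finset (Finset V)) (h : ∀ F ∈ S, 1 ≤ F.card ∧ F.card ≤ d) :
    ∑ i ∈ Icc 1 d, (-1:ℤ)^(i+1) * ((S.filter fun F => F.card = i).card : ℤ)
      = ∑ F ∈ S, (-1:ℤ)^(F.card+1) := by
  have key := Finset.sum_fiberwise_eq_sum_filter S (Icc 1 d) Finset.card
    (fun F => (-1:ℤ)^(F.card+1))
  rw [Finset.filter_true_of_mem (fun F hF => Finset.mem_Icc.mpr (h F hF))] at key
  rw [← key]
  refine Finset.sum_congr rfl fun i hi => ?_
  calc (-1:ℤ)^(i+1) * ((S.filter fun F => F.card = i).card : ℤ)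
      = ∑ F ∈ S.filter (fun F => F.card = i), (-1:ℤ)^(i+1) := by
        rw [Finset.sum_const, nsmul_eq_mul, mul_comm]
    _ = ∑ F ∈ S.filter (fun F => F.card = i), (-1:ℤ)^(F.card+1) :=
        Finset.sum_congr rfl fun F hF => by rw [(Finset.mem_filter.mp hF).2]

/-- `χ(Δ) = (−1)^{d−1} χ(Δ^int)` for a reciprocal complex; the sign exponents `i + 1`
and `d + 1` have the same parities as `i − 1` and `d − 1` respectively. -/
theorem chi_eq_chi_int {V : Type*} [DecidableEq V] (Δ : Finset (Finset V)) (d : ℕ)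
    (hd : 1 ≤ d) (hΔ : IsSimplicialComplex Δ) (hdim : HasDimension Δ d)
    (hrec : IsReciprocal Δ d) :
    (∑ i ∈ Icc 1 d, (-1 : ℤ) ^ (i + 1) * (fnum Δ i : ℤ))
      = (-1 : ℤ) ^ (d + 1) * ∑ i ∈ Icc 1 d, (-1 : ℤ) ^ (i + 1) * (fint Δ d i : ℤ) := by
  classical
  obtain ⟨hempty, hclosed⟩ := hΔ
  obtain ⟨hcard, -⟩ := hdim
  set S := Δ.filter (fun F => F ≠ ∅) with hS
  set T := Δ.filter (fun F => F ≠ ∅ ∧ mult Δ d F = 1) with hT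
  have hSmem : ∀ F ∈ S, F ∈ Δ ∧ F ≠ ∅ := fun F hF => Finset.mem_filter.mp hF
  have hTmem : ∀ F ∈ T, F ∈ Δ ∧ F ≠ ∅ ∧ mult Δ d F = 1 := fun F hF => Finset.mem_filter.mp hF
  have hScard : ∀ F ∈ S, 1 ≤ F.card ∧ F.card ≤ d := fun F hF =>
    ⟨Finset.card_pos.mpr (Finset.nonempty_iff_ne_empty.mpr (hSmem F hF).2),
      hcard F (hSmem F hF).1⟩
  have hTcard : ∀ F ∈ T, 1 ≤ F.card ∧ F.card ≤ d := fun F hF =>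
    ⟨Finset.card_pos.mpr (Finset.nonempty_iff_ne_empty.mpr (hTmem F hF).2.1),
      hcard F (hTmem F hF).1⟩
  have hL : (∑ i ∈ Icc 1 d, (-1:ℤ)^(i+1) * (fnum Δ i : ℤ))
      = ∑ F ∈ S, (-1:ℤ)^(F.card+1) := by
    rw [← sum_sign_card_aux d S hScard]
    refine Finset.sum_congr rfl fun i hi => ?_
    have hi1 : 1 ≤ i := (Finset.mem_Icc.mp hi).1
    have hfe : Δ.filter (fun F => F.card = i) = S.filter (fun F => F.card = i) := by
      ext F
      simp only [hS, Finset.mem_filter]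
      constructor
      · rintro ⟨h1, h2⟩
        exact ⟨⟨h1, fun he => by rw [he, Finset.card_empty] at h2; omega⟩, h2⟩
      · rintro ⟨⟨h1, _⟩, h2⟩; exact ⟨h1, h2⟩
    rw [fnum, hfe]
  have hR : (∑ i ∈ Icc 1 d, (-1:ℤ)^(i+1) * (fint Δ d i : ℤ))
      = ∑ F ∈ T, (-1:ℤ)^(F.card+1) := by
    rw [← sum_sign_card_aux d T hTcard]
    refine Finset.sum_congr rfl fun i hi => ?_
    have hfe : Δ.filter (fun F => F.card = i ∧ F ≠ ∅ ∧ mult Δ d F = 1)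
        = T.filter (fun F => F.card = i) := by
      ext F
      simp only [hT, Finset.mem_filter]
      tauto
    rw [fint, hfe]
  have h3 : ∀ G ∈ Δ, ∑ F ∈ S.filter (fun F => F ⊆ G), (-1:ℤ)^(F.card+1)
      = if G = ∅ then 0 else 1 := by
    intro G hG
    have hfe : S.filter (fun F => F ⊆ G) = G.powerset.filter (fun F => F ≠ ∅) := by
      ext F
      simp only [hS, Finset.mem_filter, Finset.mem_powerset]
      constructor
      · rintro ⟨⟨_, hne⟩, hsub⟩; exact ⟨hsub, hne⟩
      · rintro ⟨hsub, hne⟩; exact ⟨⟨hclosed G hG F hsub, hne⟩, hsub⟩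
    rw [hfe]
    have hfull := Finset.sum_powerset_neg_one_pow_card (x := G)
    have hsplit : ∑ F ∈ G.powerset, (-1:ℤ)^(F.card)
        = (∑ F ∈ G.powerset.filter (fun F => F ≠ ∅), (-1:ℤ)^F.card) + 1 := by
      rw [← Finset.sum_filter_add_sum_filter_not G.powerset (fun F => F ≠ ∅)]
      congr 1
      have : G.powerset.filter (fun F => ¬ F ≠ ∅) = {∅} := by
        ext F
        simp only [Finset.mem_filter, Finset.mem_powerset, not_not, Finset.mem_singleton]
        constructor
        · rintro ⟨_, h⟩; exact h
        · rintro rfl; exact ⟨Finset.empty_subset G, rfl⟩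
      rw [this, Finset.sum_singleton, Finset.card_empty, pow_zero]
    have h4 : ∑ F ∈ G.powerset.filter (fun F => F ≠ ∅), (-1:ℤ)^F.card
        = (if G = ∅ then (1:ℤ) else 0) - 1 := by
      rw [← hfull, hsplit]; ring
    calc ∑ F ∈ G.powerset.filter (fun F => F ≠ ∅), (-1:ℤ)^(F.card+1)
        = ∑ F ∈ G.powerset.filter (fun F => F ≠ ∅), (-1:ℤ)^F.card * (-1) := by
          simp only [pow_succ]
      _ = ((if G = ∅ then (1:ℤ) else 0) - 1) * (-1) := by rw [← Finset.sum_mul, h4]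
      _ = if G = ∅ then 0 else 1 := by split_ifs <;> ring
  have hmain : ∑ F ∈ T, (-1:ℤ)^(F.card+1) = ∑ G ∈ S, (-1:ℤ)^(d - G.card) := by
    have e1 : S.filter (fun F => mult Δ d F = 1) = T := by
      rw [hS, hT, Finset.filter_filter]
    calc ∑ F ∈ T, (-1:ℤ)^(F.card+1)
        = ∑ F ∈ S, mult Δ d F * (-1:ℤ)^(F.card+1) := by
          rw [← Finset.sum_filter_add_sum_filter_not S (fun F => mult Δ d F = 1)
            (fun F => mult Δ d F * (-1:ℤ)^(F.card+1))]
          have e2 : ∀ F ∈ S.filter (fun F => ¬ mult Δ d F = 1),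
              mult Δ d F * (-1:ℤ)^(F.card+1) = 0 := by
            intro F hF
            obtain ⟨hFS, hne⟩ := Finset.mem_filter.mp hF
            obtain ⟨hFΔ, hF0⟩ := hSmem F hFS
            rcases hrec F hFΔ hF0 with h | h
            · rw [h, zero_mul]
            · exact absurd h hne
          rw [Finset.sum_eq_zero e2, add_zero, e1]
          exact Finset.sum_congr rfl fun F hF => by
            rw [(hTmem F hF).2.2, one_mul]
      _ = ∑ F ∈ S, ∑ G ∈ Δ, (if F ⊆ G then (-1:ℤ)^(d - G.card) * (-1:ℤ)^(F.card+1) else 0) := by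
          refine Finset.sum_congr rfl fun F _ => ?_
          rw [mult, Finset.sum_mul, Finset.sum_filter]
      _ = ∑ G ∈ Δ, ∑ F ∈ S, (if F ⊆ G then (-1:ℤ)^(d - G.card) * (-1:ℤ)^(F.card+1) else 0) :=
          Finset.sum_comm
      _ = ∑ G ∈ Δ, (-1:ℤ)^(d - G.card) * ∑ F ∈ S.filter (fun F => F ⊆ G), (-1:ℤ)^(F.card+1) := by
          refine Finset.sum_congr rfl fun G _ => ?_
          rw [← Finset.sum_filter, Finset.mul_sum]
      _ = ∑ G ∈ Δ, (if G ≠ ∅ then (-1:ℤ)^(d - G.card) else 0) := by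
          refine Finset.sum_congr rfl fun G hG => ?_
          rw [h3 G hG]
          split_ifs with h1 h2 h2 <;> simp_all
      _ = ∑ G ∈ S, (-1:ℤ)^(d - G.card) := by rw [← Finset.sum_filter, hS]
  rw [hL, hR, hmain, Finset.mul_sum]
  refine Finset.sum_congr rfl fun G hG => ?_
  have hle : G.card ≤ d := (hScard G hG).2
  have hsq : (-1:ℤ)^(G.card) * (-1)^(G.card) = 1 := by
    rw [← pow_add]; exact Even.neg_one_pow ⟨G.card, rfl⟩
  have h2 : (-1:ℤ)^(d - G.card) = (-1)^d * (-1)^(G.card) := by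
    have key : (-1:ℤ)^(d - G.card) * (-1)^(G.card) = (-1)^d := by
      rw [← pow_add, Nat.sub_add_cancel hle]
    calc (-1:ℤ)^(d - G.card)
        = (-1:ℤ)^(d - G.card) * ((-1)^(G.card) * (-1)^(G.card)) := by rw [hsq, mul_one]
      _ = ((-1:ℤ)^(d - G.card) * (-1)^(G.card)) * (-1)^(G.card) := by ring
      _ = (-1:ℤ)^d * (-1)^(G.card) := by rw [key]
  have hodd : (-1:ℤ)^(d+1) * (-1)^d = -1 := by
    rw [← pow_add]; exact Odd.neg_one_pow ⟨d, by ring⟩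
  rw [h2, ← mul_assoc, hodd, pow_succ]
  ring
end

section
/- (Inverse Dehn–Sommerville relations for reciprocal complexes.) Let Δ be a reciprocal simplicial complex of dimension d−1. Then for every k with 1 ≤ k ≤ d: f^int_{k−1} = ∑_{i=k}^d (−1)^{d−i} · binomial(i, k) · f_{i−1}. -/
open Polynomial Finset

/-- Inverse Dehn–Sommerville relations for reciprocal complexes:
`f^int_{k−1} = ∑_{i=k}^d (−1)^{d−i} C(i,k) f_{i−1}` for `1 ≤ k ≤ d`. -/
theorem DS_reciprocal_inverse {V : Type*} [DecidableEq V] (Δ : Finset (Finset V)) (d : ℕ)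
    (hd : 1 ≤ d) (hΔ : IsSimplicialComplex Δ) (hdim : HasDimension Δ d)
    (hrec : IsReciprocal Δ d) :
    ∀ k, 1 ≤ k → k ≤ d →
      (fint Δ d k : ℤ)
        = ∑ i ∈ Icc k d, (-1 : ℤ) ^ (d - i) * (i.choose k : ℤ) * (fnum Δ i : ℤ) := by
  intro k hk hkd
  set S := Δ.filter (fun F => F.card = k) with hS
  have hne : ∀ F ∈ S, F ≠ ∅ := by
    intro F hF h
    rw [hS, mem_filter, h] at hF
    have := hF.2
    rw [Finset.card_empty] at this
    omega
  -- step 1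
  have h1 : (fint Δ d k : ℤ) = ∑ F ∈ S, mult Δ d F := by
    have key : (Δ.filter fun F => F.card = k ∧ F ≠ ∅ ∧ mult Δ d F = 1)
        = S.filter (fun F => mult Δ d F = 1) := by
      rw [hS, filter_filter]
      apply filter_congr
      intro F hF
      constructor
      · rintro ⟨a, _, c⟩; exact ⟨a, c⟩
      · rintro ⟨a, c⟩
        refine ⟨a, fun h => ?_, c⟩
        rw [h, Finset.card_empty] at a; omega
    rw [fint, key, ← Finset.sum_boole]
    refine Finset.sum_congr rfl fun F hF => ?_
    rcases hrec F (mem_filter.mp hF).1 (hne F hF) with h | h <;> simp [h]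
  -- step 2: Fubini
  have h2 : ∑ F ∈ S, mult Δ d F
      = ∑ G ∈ Δ, ((S.filter (fun F => F ⊆ G)).card : ℤ) * (-1 : ℤ) ^ (d - G.card) := by
    simp only [mult]
    have e1 : ∀ F : Finset V, ∑ G ∈ Δ.filter (fun G => F ⊆ G), (-1 : ℤ) ^ (d - G.card)
        = ∑ G ∈ Δ, if F ⊆ G then (-1 : ℤ) ^ (d - G.card) else 0 := fun F =>
      (Finset.sum_filter _ _)
    simp only [e1]
    rw [Finset.sum_comm]
    refine Finset.sum_congr rfl fun G hG => ?_
    rw [← Finset.sum_filter, Finset.sum_const, nsmul_eq_mul]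
  -- step 3: cardinality is a binomial coefficient
  have h3 : ∀ G ∈ Δ, (S.filter (fun F => F ⊆ G)).card = G.card.choose k := by
    intro G hG
    rw [← Finset.card_powersetCard k G]
    congr 1
    ext F
    simp only [hS, mem_filter, mem_powersetCard, filter_filter]
    constructor
    · rintro ⟨_, b, c⟩; exact ⟨c, b⟩
    · rintro ⟨a, b⟩; exact ⟨hΔ.2 G hG F a, b, a⟩
  -- step 4: group by cardinality
  have h4 : ∑ G ∈ Δ, ((G.card.choose k : ℤ)) * (-1 : ℤ) ^ (d - G.card)
      = ∑ i ∈ Finset.range (d + 1), (-1 : ℤ) ^ (d - i) * (i.choose k : ℤ) * (fnum Δ i : ℤ) := by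
    rw [← Finset.sum_fiberwise_of_maps_to (g := fun G => G.card) (t := Finset.range (d + 1))
      (fun G hG => Finset.mem_range.mpr (Nat.lt_succ_of_le (hdim.1 G hG)))]
    refine Finset.sum_congr rfl fun i hi => ?_
    have e2 : ∀ G ∈ Δ.filter (fun G => G.card = i),
        ((G.card.choose k : ℤ)) * (-1 : ℤ) ^ (d - G.card)
          = ((i.choose k : ℤ)) * (-1 : ℤ) ^ (d - i) := by
      intro G hG
      rw [(Finset.mem_filter.mp hG).2]
    rw [Finset.sum_congr rfl e2, Finset.sum_const, nsmul_eq_mul, fnum]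
    ring
  rw [h1, h2]
  rw [Finset.sum_congr rfl (fun G hG => by rw [h3 G hG]), h4]
  symm
  apply Finset.sum_subset
  · intro i hi
    simp only [Finset.mem_Icc, Finset.mem_range] at *
    omega
  · intro i hi hni
    simp only [Finset.mem_Icc, Finset.mem_range] at *
    have : i < k := by omega
    rw [Nat.choose_eq_zero_of_lt this]
    simp
end

section
/- Every odd-dimensional semi-Eulerian complex is Eulerian: if Δ is a semi-Eulerian simplicial complex of dimension d−1 with d even, then χ̃(Δ) = (−1)^{d−1} = −1 (equivalently, χ(Δ) = 0 and m_∅ = 1). -/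
open Polynomial Finset

/-- Every odd-dimensional semi-Eulerian complex is Eulerian: if `d` is even then
`χ̃(Δ) = (−1)^{d−1} = −1`. -/
theorem odd_dim_semiEulerian_is_Eulerian {V : Type*} [DecidableEq V]
    (Δ : Finset (Finset V)) (d : ℕ)
    (hd : 1 ≤ d) (hΔ : IsSimplicialComplex Δ) (hdim : HasDimension Δ d)
    (hse : IsSemiEulerian Δ d) (hdeven : Even d) :
    chiTilde Δ = -1 := by
  classical
  set S := Δ.filter (fun F => F ≠ ∅) with hS
  -- split off the empty face
  have hsplit : chiTilde Δ = -1 + ∑ F ∈ S, (-1 : ℤ) ^ (F.card + 1) := by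
    unfold chiTilde
    rw [← Finset.sum_filter_add_sum_filter_not Δ (fun F => F = ∅)]
    have h1 : Δ.filter (fun F => F = ∅) = {∅} := by
      ext F
      simp only [Finset.mem_filter, Finset.mem_singleton]
      constructor
      · rintro ⟨_, h⟩; exact h
      · rintro rfl; exact ⟨hΔ.1, rfl⟩
    have h2 : Δ.filter (fun F => ¬ F = ∅) = S := by
      rw [hS]
    rw [h1, h2]
    simp
  -- the inner sum over subsets of G
  have key : ∀ G ∈ Δ, ∑ F ∈ S.filter (fun F => F ⊆ G), (-1 : ℤ) ^ (F.card + 1)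
      = if G = ∅ then 0 else 1 := by
    intro G hG
    have hfe : S.filter (fun F => F ⊆ G) = G.powerset.filter (fun F => F ≠ ∅) := by
      ext F
      simp only [hS, Finset.mem_filter, Finset.mem_powerset]
      constructor
      · rintro ⟨⟨_, h2⟩, h3⟩; exact ⟨h3, h2⟩
      · rintro ⟨h1, h2⟩; exact ⟨⟨hΔ.2 G hG F h1, h2⟩, h1⟩
    rw [hfe]
    have h1 : ∑ F ∈ G.powerset, (-1 : ℤ) ^ F.card = if G = ∅ then 1 else 0 :=
      Finset.sum_powerset_neg_one_pow_card
    have h2 : ∑ F ∈ G.powerset.filter (fun F => F ≠ ∅), (-1 : ℤ) ^ F.card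
        = (if G = ∅ then 1 else 0) - 1 := by
      rw [← h1, ← Finset.sum_filter_add_sum_filter_not G.powerset (fun F => F ≠ ∅)]
      have h3 : G.powerset.filter (fun F => ¬ F ≠ ∅) = {∅} := by
        ext F
        simp only [Finset.mem_filter, Finset.mem_powerset, not_not, Finset.mem_singleton]
        constructor
        · rintro ⟨_, h⟩; exact h
        · rintro rfl; exact ⟨Finset.empty_subset G, rfl⟩
      rw [h3]
      simp
    have h3 : ∑ F ∈ G.powerset.filter (fun F => F ≠ ∅), (-1 : ℤ) ^ (F.card + 1)
        = - ∑ F ∈ G.powerset.filter (fun F => F ≠ ∅), (-1 : ℤ) ^ F.card := by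
      rw [← Finset.sum_neg_distrib]
      apply Finset.sum_congr rfl
      intro F _; ring
    rw [h3, h2]
    split_ifs <;> ring
  -- parity lemma
  have hpow : ∀ c : ℕ, c ≤ d → (-1 : ℤ) ^ (d - c) = (-1) ^ c := by
    intro c hc
    have h := (pow_add (-1 : ℤ) (d - c) c).symm
    rw [Nat.sub_add_cancel hc, Even.neg_one_pow hdeven] at h
    rcases Nat.even_or_odd c with he | ho
    · rw [he.neg_one_pow] at h ⊢; linarith
    · rw [ho.neg_one_pow] at h ⊢; linarith
  -- main double counting
  have hX : ∑ F ∈ S, (-1 : ℤ) ^ (F.card + 1)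
      = ∑ G ∈ Δ, (-1 : ℤ) ^ (d - G.card) * (if G = ∅ then 0 else 1) := by
    calc ∑ F ∈ S, (-1 : ℤ) ^ (F.card + 1)
        = ∑ F ∈ S, (-1 : ℤ) ^ (F.card + 1) * mult Δ d F := by
          apply Finset.sum_congr rfl
          intro F hF
          rw [hse F (Finset.mem_filter.mp hF).1 (Finset.mem_filter.mp hF).2, mul_one]
      _ = ∑ F ∈ S, ∑ G ∈ Δ,
            (if F ⊆ G then (-1 : ℤ) ^ (F.card + 1) * (-1) ^ (d - G.card) else 0) := by
          apply Finset.sum_congr rfl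
          intro F _
          rw [mult, Finset.mul_sum, Finset.sum_filter]
      _ = ∑ G ∈ Δ, ∑ F ∈ S,
            (if F ⊆ G then (-1 : ℤ) ^ (F.card + 1) * (-1) ^ (d - G.card) else 0) :=
          Finset.sum_comm
      _ = ∑ G ∈ Δ, (-1 : ℤ) ^ (d - G.card) * (if G = ∅ then 0 else 1) := by
          apply Finset.sum_congr rfl
          intro G hG
          rw [← Finset.sum_filter, ← key G hG, Finset.mul_sum]
          apply Finset.sum_congr rfl
          intro F _; ring
  have hX2 : ∑ G ∈ Δ, (-1 : ℤ) ^ (d - G.card) * (if G = ∅ then 0 else 1)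
      = ∑ G ∈ S, (-1 : ℤ) ^ G.card := by
    rw [hS, Finset.sum_filter]
    apply Finset.sum_congr rfl
    intro G hG
    by_cases h : G = ∅
    · simp [h]
    · rw [if_neg h, if_pos h, mul_one, hpow G.card (hdim.1 G hG)]
  have hneg : ∑ F ∈ S, (-1 : ℤ) ^ (F.card + 1) = - ∑ G ∈ S, (-1 : ℤ) ^ G.card := by
    rw [← Finset.sum_neg_distrib]
    apply Finset.sum_congr rfl
    intro F _; ring
  have hzero : ∑ F ∈ S, (-1 : ℤ) ^ (F.card + 1) = 0 := by
    have := hX.trans hX2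
    linarith [hneg, this]
  rw [hsplit, hzero]
  ring
end

section
/- (Polynomial Dehn–Sommerville relation for simplicial complexes, h-version.) Let Δ be a simplicial complex of dimension d−1 with h-numbers h_0, …, h_d. Then the polynomial identity ∑_{i=0}^d (h_i − h_{d−i}) (x+1)^i x^{d−i} = ∑_{F ∈ Δ} (m_F − 1) x^{|F|} holds in ℤ[x]. -/
open Polynomial Finset

/-! With `H(t) = ∑ hᵢ tⁱ = ∑ f_{i-1} tⁱ (1 - t)^{d-i}`, the substitutions `t = (x + 1)/x` and
`t = x/(x + 1)`, with denominators cleared by homogenizing in degree `d`, give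
`∑ hᵢ (x+1)ⁱ x^{d-i} = ∑_F (-1)^{d-|F|} (x+1)^{|F|}` and `∑ h_{d-i} (x+1)ⁱ x^{d-i} = ∑_F x^{|F|}`.
Expanding `(x+1)^{|G|} = ∑_{F ⊆ G} x^{|F|}` and exchanging the two sums turns the first
right-hand side into `∑_F m_F x^{|F|}`. -/

section Homogenize

variable {R : Type*} [CommRing R]

theorem Polynomial.homogenize_X_pow_mul_one_sub_X_pow {i d : ℕ} (hi : i ≤ d) :
    homogenize (X ^ i * (1 - X) ^ (d - i) : R[X]) d
      = .X 0 ^ i * (.X 1 - .X 0) ^ (d - i) := by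
  apply homogenize_eq_of_isHomogeneous
  · have := (MvPolynomial.isHomogeneous_X_pow (R := R) (0 : Fin 2) i).mul
      (((MvPolynomial.isHomogeneous_X R (1 : Fin 2)).sub
        (MvPolynomial.isHomogeneous_X R (0 : Fin 2))).pow (d - i))
    rwa [one_mul, Nat.add_sub_cancel' hi] at this
  · simp

theorem sum_algebraMap_mul_pow_mul_pow_eq_of_eq {S : Type*} [CommRing S] [Algebra R S] {d : ℕ}
    {c e : ℕ → R}
    (h : ∑ i ∈ range (d + 1), C (c i) * X ^ i
      = ∑ i ∈ range (d + 1), C (e i) * X ^ i * (1 - X) ^ (d - i)) (a b : S) :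
    ∑ i ∈ range (d + 1), algebraMap R S (c i) * a ^ i * b ^ (d - i)
      = ∑ i ∈ range (d + 1), algebraMap R S (e i) * a ^ i * (b - a) ^ (d - i) := by
  have key := congrArg (fun p => MvPolynomial.aeval ![a, b] (homogenize p d)) h
  simp only [homogenize_finsetSum, map_sum] at key
  convert key using 2 with i hi i hi
  · simp [homogenize_X_pow (Nat.lt_succ_iff.1 (mem_range.1 hi)), mul_assoc]
  · simp [mul_assoc, homogenize_X_pow_mul_one_sub_X_pow (Nat.lt_succ_iff.1 (mem_range.1 hi))]

end Homogenize

section Faces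

variable {V : Type*} [DecidableEq V] {Δ : Finset (Finset V)}

theorem sum_range_fnum_mul {R : Type*} [Semiring R] {d : ℕ} (hcard : ∀ F ∈ Δ, F.card ≤ d)
    (g : ℕ → R) :
    ∑ i ∈ range (d + 1), (fnum Δ i : R) * g i = ∑ F ∈ Δ, g F.card := by
  rw [← sum_fiberwise_of_maps_to (fun F hF => mem_range.2 (Nat.lt_succ_of_le (hcard F hF)))]
  refine sum_congr rfl fun i _ => ?_
  rw [fnum, ← nsmul_eq_mul, ← sum_const]
  exact sum_congr rfl fun F hF => by rw [(mem_filter.1 hF).2]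

theorem sum_add_one_pow_mul_neg_one_pow {S : Type*} [CommRing S] (hΔ : IsSimplicialComplex Δ)
    (d : ℕ) (x : S) :
    ∑ G ∈ Δ, (x + 1) ^ G.card * (-1) ^ (d - G.card) = ∑ F ∈ Δ, (mult Δ d F : S) * x ^ F.card := by
  calc ∑ G ∈ Δ, (x + 1) ^ G.card * (-1) ^ (d - G.card)
      = ∑ G ∈ Δ, ∑ F ∈ G.powerset, (-1) ^ (d - G.card) * x ^ F.card := by
        refine sum_congr rfl fun G _ => ?_
        rw [← mul_sum, ← sum_pow_mul_eq_add_pow, mul_comm]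
        simp
    _ = ∑ F ∈ Δ, ∑ G ∈ Δ.filter (F ⊆ ·), (-1) ^ (d - G.card) * x ^ F.card := by
        refine sum_comm' fun G F => ?_
        simp only [mem_powerset, mem_filter]
        exact ⟨fun ⟨hG, hFG⟩ => ⟨⟨hG, hFG⟩, hΔ.2 G hG F hFG⟩, fun ⟨⟨hG, hFG⟩, _⟩ => ⟨hG, hFG⟩⟩
    _ = ∑ F ∈ Δ, (mult Δ d F : S) * x ^ F.card := by
        simp [mult, sum_mul]

end Faces

theorem polynomial_DS_h_version_general {V : Type*} [DecidableEq V] (Δ : Finset (Finset V)) (d : ℕ)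
    (hΔ : IsSimplicialComplex Δ) (hdim : HasDimension Δ d)
    (h : ℕ → ℤ)
    (hh : (∑ i ∈ range (d + 1), C (h i) * X ^ i : Polynomial ℤ)
        = ∑ i ∈ range (d + 1), C ((fnum Δ i : ℤ)) * X ^ i * (1 - X) ^ (d - i)) :
    (∑ i ∈ range (d + 1), C (h i - h (d - i)) * (X + 1) ^ i * X ^ (d - i) : Polynomial ℤ)
      = ∑ F ∈ Δ, C (mult Δ d F - 1) * X ^ F.card := by
  have hmult : ∑ i ∈ range (d + 1), (h i : ℤ[X]) * ((X + 1) ^ i * X ^ (d - i))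
      = ∑ F ∈ Δ, (mult Δ d F : ℤ[X]) * X ^ F.card := by
    have := sum_algebraMap_mul_pow_mul_pow_eq_of_eq hh (X + 1 : ℤ[X]) X
    simp only [eq_intCast, Int.cast_natCast, mul_assoc, sum_range_fnum_mul hdim.1,
      sub_add_cancel_left] at this
    rw [this, sum_add_one_pow_mul_neg_one_pow hΔ]
  have hf : ∑ i ∈ range (d + 1), (h (d - i) : ℤ[X]) * ((X + 1) ^ i * X ^ (d - i))
      = ∑ F ∈ Δ, X ^ F.card := by
    have := sum_algebraMap_mul_pow_mul_pow_eq_of_eq hh (X : ℤ[X]) (X + 1)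
    simp only [eq_intCast, Int.cast_natCast, mul_assoc, sum_range_fnum_mul hdim.1,
      add_sub_cancel_left, one_pow, mul_one] at this
    rw [← this, ← sum_range_reflect]
    refine sum_congr rfl fun i hi => ?_
    rw [add_tsub_cancel_right, Nat.sub_sub_self (Nat.lt_succ_iff.1 (mem_range.1 hi))]
    ring
  simp only [mul_assoc, eq_intCast, Int.cast_sub, Int.cast_one, sub_mul, one_mul, sum_sub_distrib]
  rw [hmult, hf]

/-- Polynomial Dehn–Sommerville relation for simplicial complexes, h-version:
`∑ (h_i − h_{d−i}) (x+1)^i x^{d−i} = ∑_{F ∈ Δ} (m_F − 1) x^{|F|}`. -/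
theorem polynomial_DS_h_version {V : Type*} [DecidableEq V] (Δ : Finset (Finset V)) (d : ℕ)
    (hd : 1 ≤ d) (hΔ : IsSimplicialComplex Δ) (hdim : HasDimension Δ d)
    (h : ℕ → ℤ)
    (hh : (∑ i ∈ range (d + 1), C (h i) * X ^ i : Polynomial ℤ)
        = ∑ i ∈ range (d + 1), C ((fnum Δ i : ℤ)) * X ^ i * (1 - X) ^ (d - i)) :
    (∑ i ∈ range (d + 1), C (h i - h (d - i)) * (X + 1) ^ i * X ^ (d - i) : Polynomial ℤ)
      = ∑ F ∈ Δ, C (mult Δ d F - 1) * X ^ F.card :=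
  polynomial_DS_h_version_general Δ d hΔ hdim h hh
end

section
/- (Dehn–Sommerville relations for general simplicial complexes, h-version.) Let Δ be a simplicial complex of dimension d−1 with h-numbers h_0, …, h_d. Then for every i with 0 ≤ i ≤ d: h_{d−i} − h_i = (−1)^i · ∑_{F ∈ Δ} binomial(d−|F|, i) · ε_F, where ε_F = χ̃(link_F Δ) − (−1)^{d−1−|F|}. -/
set_option maxRecDepth 8000


open Polynomial Finset

/-- The error `ε_F = χ̃(link_F Δ) − (−1)^{d−1−|F|}`; the exponent is written `d + 1 + |F|`,
which has the same parity as `d − 1 − |F|`. -/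
def err {V : Type*} [DecidableEq V] (Δ : Finset (Finset V)) (d : ℕ) (F : Finset V) : ℤ :=
  chiTilde (link Δ F) - (-1 : ℤ) ^ (d + 1 + F.card)

lemma DS_negOnePow_par {R : Type*} [Monoid R] [HasDistribNeg R] {a b : ℕ}
    (hab : a % 2 = b % 2) : ((-1 : R)) ^ a = (-1) ^ b := by
  rcases Nat.even_or_odd a with ha | ha
  · have hb : Even b := by rw [Nat.even_iff] at ha ⊢; omega
    rw [ha.neg_one_pow, hb.neg_one_pow]
  · have hb : Odd b := by rw [Nat.odd_iff] at ha ⊢; omega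
    rw [ha.neg_one_pow, hb.neg_one_pow]

lemma DS_one_sub_X_pow (n : ℕ) : ((1 - X : Polynomial ℤ)) ^ n
    = ∑ m ∈ range (n+1), C ((-1)^m * (n.choose m : ℤ)) * X ^ m := by
  have h : (1 - X : Polynomial ℤ) = -X + 1 := by ring
  rw [h, add_pow]
  refine Finset.sum_congr rfl fun m _ => ?_
  simp only [one_pow, mul_one, map_mul, map_pow, map_neg, map_one, map_natCast]
  ring

lemma DS_X_sub_one_pow (n : ℕ) : (((X : Polynomial ℤ) - 1)) ^ n
    = ∑ m ∈ range (n+1), C ((-1)^(n-m) * (n.choose m : ℤ)) * X ^ m := by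
  have h : ((X : Polynomial ℤ) - 1) = X + (-1) := by ring
  rw [h, add_pow]
  refine Finset.sum_congr rfl fun m _ => ?_
  simp only [one_pow, mul_one, map_mul, map_pow, map_neg, map_one, map_natCast]
  ring

lemma DS_coeff_one_sub_X_pow (n k : ℕ) :
    ((1 - X : Polynomial ℤ) ^ n).coeff k = (-1) ^ k * n.choose k := by
  rw [DS_one_sub_X_pow, finset_sum_coeff]
  simp only [coeff_C_mul, coeff_X_pow, mul_ite, mul_one, mul_zero]
  rw [Finset.sum_ite_eq (range (n+1)) k]
  by_cases hk : k ≤ n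
  · simp [mem_range, Nat.lt_succ_iff, hk]
  · simp [mem_range, Nat.lt_succ_iff, hk, Nat.choose_eq_zero_of_lt (by omega : n < k)]

lemma DS_coeff_X_sub_one_pow (n k : ℕ) :
    (((X : Polynomial ℤ) - 1) ^ n).coeff k = (-1) ^ (n-k) * n.choose k := by
  rw [DS_X_sub_one_pow, finset_sum_coeff]
  simp only [coeff_C_mul, coeff_X_pow, mul_ite, mul_one, mul_zero]
  rw [Finset.sum_ite_eq (range (n+1)) k]
  by_cases hk : k ≤ n
  · simp [mem_range, Nat.lt_succ_iff, hk]
  · simp [mem_range, Nat.lt_succ_iff, hk, Nat.choose_eq_zero_of_lt (by omega : n < k)]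

lemma DS_sum_powerset_X_sub_one {V : Type*} [DecidableEq V] (G : Finset V) :
    ∑ t ∈ G.powerset, ((X : Polynomial ℤ) - 1) ^ (G.card - t.card) = X ^ G.card := by
  have h := Finset.prod_add (fun _ : V => (1 : Polynomial ℤ)) (fun _ : V => (X : Polynomial ℤ) - 1) G
  have h2 : ∏ _i ∈ G, ((1 : Polynomial ℤ) + (X - 1)) = X ^ G.card := by
    rw [Finset.prod_const]; ring_nf
  rw [h2] at h
  rw [h]
  refine Finset.sum_congr rfl fun t ht => ?_
  rw [Finset.mem_powerset] at ht
  rw [Finset.prod_const_one, one_mul, Finset.prod_const, Finset.card_sdiff_of_subset ht]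

lemma DS_err_eq {V : Type*} [DecidableEq V] (Δ : Finset (Finset V)) (d : ℕ)
    (hΔ : IsSimplicialComplex Δ) (hcard : ∀ F ∈ Δ, F.card ≤ d)
    (F : Finset V) :
    err Δ d F = (-1 : ℤ) ^ (d + 1 + F.card) * (mult Δ d F - 1) := by
  have key : chiTilde (link Δ F)
      = ∑ G ∈ Δ.filter (fun G => F ⊆ G), (-1 : ℤ) ^ (G.card - F.card + 1) := by
    unfold chiTilde
    refine Finset.sum_nbij' (fun G => G ∪ F) (fun G => G \ F) ?_ ?_ ?_ ?_ ?_
    · intro G hG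
      rw [link, Finset.mem_filter] at hG
      rw [Finset.mem_filter]
      exact ⟨hG.2.2, Finset.subset_union_right⟩
    · intro G hG
      rw [Finset.mem_filter] at hG
      rw [link, Finset.mem_filter]
      refine ⟨hΔ.2 G hG.1 _ (Finset.sdiff_subset), ?_, ?_⟩
      · exact Finset.sdiff_inter_self _ _
      · rw [Finset.sdiff_union_of_subset hG.2]; exact hG.1
    · intro G hG
      rw [link, Finset.mem_filter] at hG
      exact Finset.union_sdiff_cancel_right
        (Finset.disjoint_iff_inter_eq_empty.mpr hG.2.1)
    · intro G hG
      rw [Finset.mem_filter] at hG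
      exact Finset.sdiff_union_of_subset hG.2
    · intro G hG
      rw [link, Finset.mem_filter] at hG
      rw [Finset.card_union_of_disjoint (Finset.disjoint_iff_inter_eq_empty.mpr hG.2.1)]
      congr 1
      omega
  have key2 : chiTilde (link Δ F) = (-1 : ℤ) ^ (d + 1 + F.card) * mult Δ d F := by
    rw [key, mult, Finset.mul_sum]
    refine Finset.sum_congr rfl fun G hG => ?_
    rw [Finset.mem_filter] at hG
    have h1 : G.card ≤ d := hcard G hG.1
    have h2 : F.card ≤ G.card := Finset.card_le_card hG.2
    rw [← pow_add]
    exact DS_negOnePow_par (by omega)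
  rw [err, key2]
  ring

lemma DS_stepC {V : Type*} [DecidableEq V] (Δ : Finset (Finset V)) (d : ℕ)
    (hΔ : IsSimplicialComplex Δ) (hcard : ∀ F ∈ Δ, F.card ≤ d) :
    ∑ F ∈ Δ, C (mult Δ d F) * ((X : Polynomial ℤ) - 1) ^ (d - F.card)
      = ∑ F ∈ Δ, (X : Polynomial ℤ) ^ F.card * (1 - X) ^ (d - F.card) := by
  have lhs1 : ∀ F ∈ Δ, C (mult Δ d F) * ((X : Polynomial ℤ) - 1) ^ (d - F.card)
      = ∑ G ∈ Δ, (if F ⊆ G then ((-1 : Polynomial ℤ)) ^ (d - G.card) * (X - 1) ^ (d - F.card) else 0) := by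
    intro F _
    rw [mult, map_sum, Finset.sum_mul, Finset.sum_filter]
    refine Finset.sum_congr rfl fun G _ => ?_
    split
    · simp
    · simp
  rw [Finset.sum_congr rfl lhs1, Finset.sum_comm]
  refine Finset.sum_congr rfl fun G hG => ?_
  rw [← Finset.sum_filter]
  have hpow : Δ.filter (fun F => F ⊆ G) = G.powerset := by
    ext F
    simp only [Finset.mem_filter, Finset.mem_powerset]
    exact ⟨fun h => h.2, fun h => ⟨hΔ.2 G hG _ h, h⟩⟩
  rw [hpow]
  have step : ∀ F ∈ G.powerset, ((-1 : Polynomial ℤ)) ^ (d - G.card) * (X - 1) ^ (d - F.card)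
      = ((-1 : Polynomial ℤ)) ^ (d - G.card) * ((X - 1) ^ (d - G.card) * (X - 1) ^ (G.card - F.card)) := by
    intro F hF
    rw [Finset.mem_powerset] at hF
    have h : d - F.card = (d - G.card) + (G.card - F.card) := by
      have := Finset.card_le_card hF
      have := hcard G hG
      omega
    rw [h, pow_add]
  rw [Finset.sum_congr rfl step, ← Finset.mul_sum, ← Finset.mul_sum,
    DS_sum_powerset_X_sub_one G]
  have h1 : ((-1 : Polynomial ℤ)) ^ (d - G.card) * ((X - 1) ^ (d - G.card) * X ^ G.card)
      = ((-1) * (X - 1)) ^ (d - G.card) * X ^ G.card := by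
    rw [mul_pow]; ring
  rw [h1]
  have h2 : ((-1 : Polynomial ℤ)) * (X - 1) = 1 - X := by ring
  rw [h2]
  ring

-- step A : the fnum-sum equals the face-sum
lemma DS_stepA {V : Type*} [DecidableEq V] (Δ : Finset (Finset V)) (d : ℕ)
    (hcard : ∀ F ∈ Δ, F.card ≤ d) :
    (∑ i ∈ range (d + 1), C ((fnum Δ i : ℤ)) * X ^ i * (1 - X) ^ (d - i) : Polynomial ℤ)
      = ∑ F ∈ Δ, (X : Polynomial ℤ) ^ F.card * (1 - X) ^ (d - F.card) := by
  rw [← Finset.sum_fiberwise_of_maps_to (g := Finset.card)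
    (fun F hF => Finset.mem_range.mpr (Nat.lt_succ_of_le (hcard F hF)))
    (fun F => (X : Polynomial ℤ) ^ F.card * (1 - X) ^ (d - F.card))]
  refine Finset.sum_congr rfl fun i _ => ?_
  have : ∀ F ∈ Δ.filter (fun F => F.card = i),
      (X : Polynomial ℤ) ^ F.card * (1 - X) ^ (d - F.card)
        = X ^ i * (1 - X) ^ (d - i) := by
    intro F hF
    rw [Finset.mem_filter] at hF
    rw [hF.2]
  rw [Finset.sum_congr rfl this, Finset.sum_const, ← fnum]
  rw [nsmul_eq_mul]
  simp only [map_natCast]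
  ring

/-- Dehn–Sommerville relations for general simplicial complexes, h-version:
`h_{d−i} − h_i = (−1)^i ∑_{F ∈ Δ} C(d−|F|, i) ε_F` for `0 ≤ i ≤ d`. -/
theorem DS_general_h_version {V : Type*} [DecidableEq V] (Δ : Finset (Finset V)) (d : ℕ)
    (hd : 1 ≤ d) (hΔ : IsSimplicialComplex Δ) (hdim : HasDimension Δ d)
    (h : ℕ → ℤ)
    (hh : (∑ i ∈ range (d + 1), C (h i) * X ^ i : Polynomial ℤ)
        = ∑ i ∈ range (d + 1), C ((fnum Δ i : ℤ)) * X ^ i * (1 - X) ^ (d - i)) :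
    ∀ i ≤ d,
      h (d - i) - h i
        = (-1 : ℤ) ^ i * ∑ F ∈ Δ, ((d - F.card).choose i : ℤ) * err Δ d F := by
  intro i hi
  have hcard := hdim.1
  set Q : Polynomial ℤ := ∑ F ∈ Δ, (X : Polynomial ℤ) ^ F.card * (1 - X) ^ (d - F.card) with hQ
  set P : Polynomial ℤ := ∑ F ∈ Δ, ((X : Polynomial ℤ) - 1) ^ (d - F.card) with hP
  -- h j = Q.coeff j for j ≤ d
  have hcoeff : ∀ j ≤ d, h j = Q.coeff j := by
    intro j hj
    have := congrArg (fun p => Polynomial.coeff p j) hh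
    rw [DS_stepA Δ d hcard, ← hQ] at this
    rw [← this, finset_sum_coeff]
    simp only [coeff_C_mul, coeff_X_pow, mul_ite, mul_one, mul_zero]
    rw [Finset.sum_ite_eq (range (d+1)) j]
    simp [mem_range, Nat.lt_succ_iff, hj]
  -- reversal: Q.coeff (d - i) = P.coeff i
  have hrev : Q.coeff (d - i) = P.coeff i := by
    rw [hQ, hP, finset_sum_coeff, finset_sum_coeff]
    refine Finset.sum_congr rfl fun F hF => ?_
    have hc : F.card ≤ d := hcard F hF
    rw [mul_comm, coeff_mul_X_pow', DS_coeff_X_sub_one_pow]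
    by_cases hci : F.card ≤ d - i
    · rw [if_pos hci, DS_coeff_one_sub_X_pow]
      have e1 : d - i - F.card = d - F.card - i := by omega
      have e2 : (d - F.card).choose (d - F.card - i) = (d - F.card).choose i :=
        Nat.choose_symm (by omega)
      rw [e1, e2]
    · rw [if_neg hci, Nat.choose_eq_zero_of_lt (by omega : d - F.card < i)]
      simp
  -- main polynomial identity: P - Q = ∑ C(err) (1-X)^(d-c)
  have hmain : P - Q = ∑ F ∈ Δ, C (err Δ d F) * (1 - X) ^ (d - F.card) := by
    rw [hP, hQ, ← DS_stepC Δ d hΔ hcard, ← Finset.sum_sub_distrib]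
    refine Finset.sum_congr rfl fun F hF => ?_
    rw [DS_err_eq Δ d hΔ hcard F]
    have hc : F.card ≤ d := hcard F hF
    have hsign : C ((-1 : ℤ) ^ (d + 1 + F.card)) * ((1 - X : Polynomial ℤ)) ^ (d - F.card)
        = - ((X - 1) ^ (d - F.card)) := by
      have h1 : ((1 - X : Polynomial ℤ)) ^ (d - F.card)
          = (-1) ^ (d - F.card) * (X - 1) ^ (d - F.card) := by
        rw [← mul_pow]; ring_nf
      rw [h1]
      simp only [map_pow, map_neg, map_one]
      rw [← mul_assoc, ← pow_add]
      have : ((-1 : Polynomial ℤ)) ^ (d + 1 + F.card + (d - F.card)) = -1 := by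
        have : (d + 1 + F.card + (d - F.card)) % 2 = 1 % 2 := by omega
        rw [DS_negOnePow_par this, pow_one]
      rw [this]
      ring
    rw [map_mul]
    have hre : C ((-1 : ℤ) ^ (d + 1 + F.card)) * C (mult Δ d F - 1) * ((1 - X : Polynomial ℤ)) ^ (d - F.card)
        = C (mult Δ d F - 1) * (C ((-1 : ℤ) ^ (d + 1 + F.card)) * (1 - X) ^ (d - F.card)) := by
      ring
    rw [hre, hsign, map_sub, map_one]
    ring
  have hfinal := congrArg (fun p => Polynomial.coeff p i) hmain
  rw [Polynomial.coeff_sub] at hfinal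
  rw [hcoeff (d - i) (by omega), hcoeff i hi, hrev, hfinal, finset_sum_coeff]
  rw [Finset.mul_sum]
  refine Finset.sum_congr rfl fun F hF => ?_
  rw [coeff_C_mul, DS_coeff_one_sub_X_pow]
  ring
end

section
/- (Klee's Dehn–Sommerville relations for semi-Eulerian complexes, h-version.) Let Δ be a semi-Eulerian simplicial complex of dimension d−1 with h-numbers h_0, …, h_d. Then for every i with 0 ≤ i ≤ d: h_{d−i} − h_i = (−1)^i · binomial(d, i) · (χ̃(Δ) − (−1)^{d−1}). In particular, if Δ is Eulerian then h_{d−i} = h_i for all 0 ≤ i ≤ d. -/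
open Polynomial Finset

namespace Polynomial

variable {R : Type*} [CommRing R]

theorem coeff_one_sub_X_pow (n k : ℕ) :
    ((1 - X : R[X]) ^ n).coeff k = (-1) ^ k * n.choose k := by
  rcases le_or_gt k n with hk | hk
  · obtain ⟨m, rfl⟩ := Nat.exists_eq_add_of_le hk
    have hX : (1 - X : R[X]) = C (-1) * (X + C (-1)) := by simp; ring
    rw [hX, mul_pow, ← C_pow, coeff_C_mul, coeff_X_add_C_pow, Nat.add_sub_cancel_left]
    linear_combination (-1 : R) ^ k * (k + m).choose k * (even_two_mul m).neg_one_pow (α := R)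
  · rw [Nat.choose_eq_zero_of_lt hk, Nat.cast_zero, mul_zero]
    exact coeff_eq_zero_of_natDegree_lt (by compute_degree!)

theorem natDegree_one_sub_X_pow_le (n : ℕ) : ((1 - X : R[X]) ^ n).natDegree ≤ n := by
  compute_degree

theorem reflect_sum {ι : Type*} (s : Finset ι) (f : ι → R[X]) (N : ℕ) :
    reflect N (∑ i ∈ s, f i) = ∑ i ∈ s, reflect N (f i) := by
  ext k
  simp only [coeff_reflect, finsetSum_coeff]

theorem reflect_one_sub_X_pow (n : ℕ) : reflect n ((1 - X : R[X]) ^ n) = (X - 1) ^ n := by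
  induction n with
  | zero => simp
  | succ n ih =>
    have h1 : reflect 1 (1 - X : R[X]) = X - 1 := by
      rw [reflect_sub, reflect_one, reflect_one_X, pow_one]
    rw [pow_succ, reflect_mul _ _ (natDegree_one_sub_X_pow_le n) (by compute_degree), ih, h1,
      pow_succ]

theorem reflect_X_pow_mul_one_sub_X_pow {j d : ℕ} (hj : j ≤ d) :
    reflect d (X ^ j * (1 - X : R[X]) ^ (d - j)) = (X - 1) ^ (d - j) := by
  obtain ⟨m, rfl⟩ := Nat.exists_eq_add_of_le hj
  rw [Nat.add_sub_cancel_left,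
    reflect_mul _ _ (natDegree_X_pow_le j) (natDegree_one_sub_X_pow_le _), reflect_monomial,
    revAt_le le_rfl, Nat.sub_self, pow_zero, one_mul, reflect_one_sub_X_pow]

theorem sum_powerset_X_pow_mul_one_sub_X_pow {ι : Type*} (s : Finset ι) {d : ℕ}
    (hs : #s ≤ d) :
    ∑ t ∈ s.powerset, X ^ #t * (1 - X : R[X]) ^ (d - #t) = (1 - X) ^ (d - #s) := by
  calc ∑ t ∈ s.powerset, X ^ #t * (1 - X : R[X]) ^ (d - #t)
      = (∑ t ∈ s.powerset, X ^ #t * (1 - X : R[X]) ^ (#s - #t)) * (1 - X) ^ (d - #s) := by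
        rw [sum_mul]
        refine sum_congr rfl fun t ht => ?_
        have := card_le_card (mem_powerset.1 ht)
        rw [mul_assoc, ← pow_add]
        congr 2
        omega
    _ = (1 - X) ^ (d - #s) := by
        rw [sum_pow_mul_eq_add_pow, add_sub_cancel, one_pow, one_mul]

end Polynomial

section SimplicialComplex

variable {V : Type*} [DecidableEq V] {Δ : Finset (Finset V)} {d : ℕ}

variable (Δ d) in
noncomputable def hPolynomial : ℤ[X] :=
  ∑ G ∈ Δ, X ^ #G * (1 - X) ^ (d - #G)

theorem sum_fnum_eq_hPolynomial (hcard : ∀ G ∈ Δ, #G ≤ d) :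
    ∑ i ∈ range (d + 1), C (fnum Δ i : ℤ) * X ^ i * (1 - X) ^ (d - i) =
      hPolynomial Δ d := by
  rw [hPolynomial, ← sum_fiberwise_of_maps_to (g := card) (t := range (d + 1))
    fun G hG => mem_range_succ_iff.2 (hcard G hG)]
  refine sum_congr rfl fun i _ => ?_
  rw [sum_congr rfl fun G hG => by rw [(mem_filter.1 hG).2], sum_const, nsmul_eq_mul, fnum,
    ← C_eq_natCast, mul_assoc]

theorem mult_empty (hcard : ∀ G ∈ Δ, #G ≤ d) :
    mult Δ d ∅ = (-1) ^ (d + 1) * chiTilde Δ := by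
  rw [mult, chiTilde, filter_true_of_mem fun G _ => empty_subset G, mul_sum]
  refine sum_congr rfl fun G hG => ?_
  obtain ⟨k, rfl⟩ := Nat.exists_eq_add_of_le (hcard G hG)
  rw [Nat.add_sub_cancel_left, ← pow_add, show #G + k + 1 + (#G + 1) = k + 2 * (#G + 1) by ring,
    pow_add, pow_mul, neg_one_sq, one_pow, mul_one]

theorem reflect_hPolynomial_eq_sum_mult (hΔ : IsSimplicialComplex Δ)
    (hcard : ∀ G ∈ Δ, #G ≤ d) :
    reflect d (hPolynomial Δ d) =
      ∑ F ∈ Δ, C (mult Δ d F) * (X ^ #F * (1 - X) ^ (d - #F)) := by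
  have hdown : ∀ G ∈ Δ, Δ.filter (· ⊆ G) = G.powerset := fun G hG => by
    ext F
    simp only [mem_filter, mem_powerset, and_iff_right_iff_imp]
    exact hΔ.2 G hG F
  calc reflect d (hPolynomial Δ d)
      = ∑ G ∈ Δ, C ((-1) ^ (d - #G)) * (1 - X) ^ (d - #G) := by
        rw [hPolynomial, reflect_sum]
        refine sum_congr rfl fun G hG => ?_
        rw [reflect_X_pow_mul_one_sub_X_pow (hcard G hG), C_pow, C_neg, C_1, ← mul_pow,
          neg_one_mul, neg_sub]
    _ = ∑ G ∈ Δ, ∑ F ∈ Δ.filter (· ⊆ G),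
          C ((-1) ^ (d - #G)) * (X ^ #F * (1 - X) ^ (d - #F)) := by
        refine sum_congr rfl fun G hG => ?_
        rw [← mul_sum, hdown G hG, sum_powerset_X_pow_mul_one_sub_X_pow G (hcard G hG)]
    _ = ∑ F ∈ Δ, ∑ G ∈ Δ.filter (F ⊆ ·),
          C ((-1) ^ (d - #G)) * (X ^ #F * (1 - X) ^ (d - #F)) :=
        sum_comm' fun G F => by simp only [mem_filter]; tauto
    _ = ∑ F ∈ Δ, C (mult Δ d F) * (X ^ #F * (1 - X) ^ (d - #F)) := by
        simp only [mult, map_sum, sum_mul]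

theorem IsSemiEulerian.reflect_hPolynomial (hse : IsSemiEulerian Δ d)
    (hΔ : IsSimplicialComplex Δ) (hcard : ∀ G ∈ Δ, #G ≤ d) :
    reflect d (hPolynomial Δ d) = hPolynomial Δ d + C (mult Δ d ∅ - 1) * (1 - X) ^ d := by
  have hsplit : ∀ F ∈ Δ, C (mult Δ d F) * (X ^ #F * (1 - X : ℤ[X]) ^ (d - #F)) =
      X ^ #F * (1 - X) ^ (d - #F) + C (mult Δ d F - 1) * (X ^ #F * (1 - X) ^ (d - #F)) := by
    intro F _
    rw [C_sub, C_1]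
    ring
  rw [reflect_hPolynomial_eq_sum_mult hΔ hcard, sum_congr rfl hsplit, sum_add_distrib,
    ← hPolynomial, sum_eq_single_of_mem ∅ hΔ.1 fun F hF hF0 => by
      rw [hse F hF hF0, sub_self, C_0, zero_mul]]
  rw [card_empty, pow_zero, Nat.sub_zero, one_mul]

theorem IsSemiEulerian.coeff_hPolynomial_sub (hse : IsSemiEulerian Δ d)
    (hΔ : IsSimplicialComplex Δ) (hcard : ∀ G ∈ Δ, #G ≤ d) {i : ℕ} (hi : i ≤ d) :
    (hPolynomial Δ d).coeff (d - i) - (hPolynomial Δ d).coeff i =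
      (mult Δ d ∅ - 1) * ((-1) ^ i * d.choose i) := by
  have := congrArg (coeff · i) (hse.reflect_hPolynomial hΔ hcard)
  simp only [coeff_reflect, revAt_le hi, coeff_add, coeff_C_mul, coeff_one_sub_X_pow] at this
  rw [this]
  ring

theorem IsSemiEulerian.mult_empty_eq_one_of_even (hse : IsSemiEulerian Δ d)
    (hΔ : IsSimplicialComplex Δ) (hcard : ∀ G ∈ Δ, #G ≤ d) (hd : Even d) :
    mult Δ d ∅ = 1 := by
  have hfirst := hse.coeff_hPolynomial_sub hΔ hcard (Nat.zero_le d)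
  have hlast := hse.coeff_hPolynomial_sub hΔ hcard le_rfl
  simp only [Nat.sub_zero, Nat.sub_self, pow_zero, hd.neg_one_pow, Nat.choose_zero_right,
    Nat.choose_self, Nat.cast_one, mul_one] at hfirst hlast
  linarith

theorem IsSemiEulerian.mult_empty_sub_one (hse : IsSemiEulerian Δ d)
    (hΔ : IsSimplicialComplex Δ) (hcard : ∀ G ∈ Δ, #G ≤ d) :
    mult Δ d ∅ - 1 = chiTilde Δ - (-1) ^ (d + 1) := by
  have hm := mult_empty hcard
  rcases d.even_or_odd with hd | hd
  · rw [hse.mult_empty_eq_one_of_even hΔ hcard hd, hd.add_one.neg_one_pow] at hm ⊢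
    linarith
  · rw [hm, hd.add_one.neg_one_pow, one_mul]

end SimplicialComplex

theorem DS_semiEulerian_h_version_general {V : Type*} [DecidableEq V] (Δ : Finset (Finset V)) (d : ℕ)
    (hΔ : IsSimplicialComplex Δ) (hdim : HasDimension Δ d)
    (hse : IsSemiEulerian Δ d)
    (h : ℕ → ℤ)
    (hh : (∑ i ∈ range (d + 1), C (h i) * X ^ i : Polynomial ℤ)
        = ∑ i ∈ range (d + 1), C ((fnum Δ i : ℤ)) * X ^ i * (1 - X) ^ (d - i)) :
    (∀ i ≤ d,
      h (d - i) - h i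
        = (-1 : ℤ) ^ i * (d.choose i : ℤ) * (chiTilde Δ - (-1 : ℤ) ^ (d + 1)))
    ∧ (chiTilde Δ = (-1 : ℤ) ^ (d + 1) → ∀ i ≤ d, h (d - i) = h i) := by
  have hcoeff : ∀ k ≤ d, (hPolynomial Δ d).coeff k = h k := fun k hk => by
    rw [← sum_fnum_eq_hPolynomial hdim.1, ← hh, finsetSum_coeff]
    simp only [coeff_C_mul_X_pow, sum_ite_eq, mem_range_succ_iff, if_pos hk]
  have hrel : ∀ i ≤ d, h (d - i) - h i =
      (-1) ^ i * d.choose i * (chiTilde Δ - (-1) ^ (d + 1)) := fun i hi => by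
    rw [← hcoeff _ (Nat.sub_le d i), ← hcoeff i hi, hse.coeff_hPolynomial_sub hΔ hdim.1 hi,
      hse.mult_empty_sub_one hΔ hdim.1]
    ring
  refine ⟨hrel, fun hchi i hi => ?_⟩
  rw [← sub_eq_zero, hrel i hi, hchi, sub_self, mul_zero]

/-- Klee's Dehn–Sommerville relations for semi-Eulerian complexes, h-version:
`h_{d−i} − h_i = (−1)^i C(d,i) (χ̃(Δ) − (−1)^{d−1})`; the exponent `d + 1` has the same
parity as `d − 1`. In particular, if `Δ` is Eulerian then `h_{d−i} = h_i`. -/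
theorem DS_semiEulerian_h_version {V : Type*} [DecidableEq V] (Δ : Finset (Finset V)) (d : ℕ)
    (hd : 1 ≤ d) (hΔ : IsSimplicialComplex Δ) (hdim : HasDimension Δ d)
    (hse : IsSemiEulerian Δ d)
    (h : ℕ → ℤ)
    (hh : (∑ i ∈ range (d + 1), C (h i) * X ^ i : Polynomial ℤ)
        = ∑ i ∈ range (d + 1), C ((fnum Δ i : ℤ)) * X ^ i * (1 - X) ^ (d - i)) :
    (∀ i ≤ d,
      h (d - i) - h i
        = (-1 : ℤ) ^ i * (d.choose i : ℤ) * (chiTilde Δ - (-1 : ℤ) ^ (d + 1)))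
    ∧ (chiTilde Δ = (-1 : ℤ) ^ (d + 1) → ∀ i ≤ d, h (d - i) = h i) :=
  DS_semiEulerian_h_version_general Δ d hΔ hdim hse h hh
end

section
/- (The f=h reciprocity for balanced simplicial complexes.) Let Δ be a balanced simplicial complex of type a = (a_1, …, a_m) with flag h-numbers (h_b)_{b ≤ a}, and let d = |a|. Then the identity ∑_{b ≤ a} h_b (1+x)^b x^{a−b} = ∑_{F ∈ Δ} m_F x^{b(F)} holds in ℤ[x_1, …, x_m], where m_F = ∑_{G ∈ Δ, F ⊆ G} (−1)^{d−|G|} and (1+x)^c := ∏_j (1+x_j)^{c_j}. -/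
open Finset MvPolynomial

/-- `bvec κ F j` is the number of vertices of `F` with color `j`. -/
def bvec {V : Type*} [DecidableEq V] {m : ℕ} (κ : V → Fin m) (F : Finset V) (j : Fin m) : ℕ :=
  (F.filter fun v => κ v = j).card

/-- `Δ` is balanced of type `a` with respect to the coloring `κ`: every face of `Δ` that is
maximal under inclusion has exactly `a j` vertices of color `j`, for each color `j`. -/
def IsBalanced {V : Type*} [DecidableEq V] {m : ℕ} (Δ : Finset (Finset V))
    (κ : V → Fin m) (a : Fin m → ℕ) : Prop :=
  ∀ F ∈ Δ, (∀ G ∈ Δ, F ⊆ G → G = F) → ∀ j, bvec κ F j = a j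

/-!
Substitute `x ↦ (1 + x) / x` in the defining identity of the flag `h`-numbers and multiply by
`x^a`. On the left, `x^b` becomes `(1 + x)^b x^{a - b}`; on the right, the face term
`x^{b(F)} (1 - x)^{a - b(F)}` becomes `(-1)^{d - |F|} (1 + x)^{b(F)}`, because
`1 - (1 + x)/x = -1/x`. Expanding `(1 + x)^{b(G)} = ∑_{F ⊆ G} x^{b(F)}` and exchanging the two
sums over faces collects exactly the multiplicities `m_F`. The substitution is carried out in the
fraction field of `ℤ[x_1, …, x_m]`.
-/

section Multiplicity

variable {V : Type*} [DecidableEq V]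

theorem sum_mult_mul_prod {S : Type*} [CommRing S] {Δ : Finset (Finset V)}
    (hΔ : IsSimplicialComplex Δ) (d : ℕ) (z : V → S) :
    ∑ F ∈ Δ, (mult Δ d F : S) * ∏ v ∈ F, z v
      = ∑ G ∈ Δ, (-1 : S) ^ (d - G.card) * ∏ v ∈ G, (1 + z v) := by
  have faces_below : ∀ G ∈ Δ, Δ.filter (· ⊆ G) = G.powerset := fun G hG => by
    ext F
    simpa using fun hFG => hΔ.2 G hG F hFG
  calc ∑ F ∈ Δ, (mult Δ d F : S) * ∏ v ∈ F, z v
      = ∑ F ∈ Δ, ∑ G ∈ Δ.filter (F ⊆ ·), (-1 : S) ^ (d - G.card) * ∏ v ∈ F, z v := by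
        simp only [mult, Int.cast_sum, Int.cast_pow, Int.cast_neg, Int.cast_one, sum_mul]
    _ = ∑ G ∈ Δ, ∑ F ∈ Δ.filter (· ⊆ G), (-1 : S) ^ (d - G.card) * ∏ v ∈ F, z v :=
        sum_comm' fun F G => by simp only [mem_filter]; tauto
    _ = ∑ G ∈ Δ, (-1 : S) ^ (d - G.card) * ∏ v ∈ G, (1 + z v) := by
        refine sum_congr rfl fun G hG => ?_
        rw [faces_below G hG, ← mul_sum, prod_one_add]

end Multiplicity

section Coloring

variable {V : Type*} [DecidableEq V] {m : ℕ}

theorem sum_bvec (κ : V → Fin m) (F : Finset V) : ∑ j, bvec κ F j = F.card :=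
  (card_eq_sum_card_fiberwise fun v _ => mem_univ (κ v)).symm

theorem prod_pow_bvec {M : Type*} [CommMonoid M] (κ : V → Fin m) (F : Finset V)
    (y : Fin m → M) : ∏ j, y j ^ bvec κ F j = ∏ v ∈ F, y (κ v) := by
  rw [← prod_fiberwise F κ fun v => y (κ v)]
  refine prod_congr rfl fun j _ => ?_
  rw [prod_congr rfl fun v hv => congrArg y (mem_filter.1 hv).2, prod_const]
  rfl

theorem IsBalanced.bvec_le {Δ : Finset (Finset V)} {κ : V → Fin m} {a : Fin m → ℕ}
    (hbal : IsBalanced Δ κ a) {F : Finset V} (hF : F ∈ Δ) : bvec κ F ≤ a := by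
  intro j
  obtain ⟨G, hG, hmax⟩ :=
    exists_max_image (Δ.filter (F ⊆ ·)) card ⟨F, mem_filter.2 ⟨hF, subset_rfl⟩⟩
  rw [mem_filter] at hG
  have hG_maximal : ∀ G' ∈ Δ, G ⊆ G' → G' = G := fun G' hG' hGG' =>
    (eq_of_subset_of_card_le hGG' (hmax G' (mem_filter.2 ⟨hG', hG.2.trans hGG'⟩))).symm
  rw [← hbal G hG.1 hG_maximal j]
  exact card_le_card (filter_subset_filter _ hG.2)

theorem IsBalanced.sum_sub_bvec {Δ : Finset (Finset V)} {κ : V → Fin m} {a : Fin m → ℕ}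
    (hbal : IsBalanced Δ κ a) {F : Finset V} (hF : F ∈ Δ) :
    ∑ j, (a j - bvec κ F j) = ∑ j, a j - F.card := by
  rw [sum_tsub_distrib _ fun j _ => hbal.bvec_le hF j, sum_bvec]

theorem sum_mult_mul_prod_pow_bvec {S : Type*} [CommRing S] {Δ : Finset (Finset V)}
    (hΔ : IsSimplicialComplex Δ) (κ : V → Fin m) (d : ℕ) (y : Fin m → S) :
    ∑ F ∈ Δ, (mult Δ d F : S) * ∏ j, y j ^ bvec κ F j
      = ∑ G ∈ Δ, (-1 : S) ^ (d - G.card) * ∏ j, (1 + y j) ^ bvec κ G j := by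
  simp only [prod_pow_bvec]
  exact sum_mult_mul_prod hΔ d (y ∘ κ)

end Coloring

section Substitution

variable {ι K : Type*} [Fintype ι] [Field K] {y : ι → K}

theorem prod_one_add_div_pow_mul_prod_pow (hy : ∀ j, y j ≠ 0) {a b : ι → ℕ}
    (hba : b ≤ a) :
    (∏ j, ((1 + y j) / y j) ^ b j) * ∏ j, y j ^ a j
      = (∏ j, (1 + y j) ^ b j) * ∏ j, y j ^ (a j - b j) := by
  rw [← prod_mul_distrib, ← prod_mul_distrib]
  refine prod_congr rfl fun j _ => ?_
  have hyj := hy j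
  rw [pow_sub₀ _ hyj (hba j), div_pow]
  field_simp

theorem prod_one_add_div_pow_mul_prod_one_sub_pow_mul_prod_pow (hy : ∀ j, y j ≠ 0)
    {a b : ι → ℕ} (hba : b ≤ a) :
    (∏ j, ((1 + y j) / y j) ^ b j) * (∏ j, (1 - (1 + y j) / y j) ^ (a j - b j))
        * ∏ j, y j ^ a j
      = (-1 : K) ^ (∑ j, (a j - b j)) * ∏ j, (1 + y j) ^ b j := by
  rw [← prod_mul_distrib, ← prod_mul_distrib, ← prod_pow_eq_pow_sum, ← prod_mul_distrib]
  refine prod_congr rfl fun j _ => ?_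
  have hyj := hy j
  have one_sub : 1 - (1 + y j) / y j = -1 / y j := by field_simp; ring
  rw [one_sub, ← Nat.add_sub_cancel' (hba j), pow_add, Nat.add_sub_cancel_left, div_pow, div_pow]
  field_simp

end Substitution

theorem flag_fh_reciprocity_general {V : Type*} [DecidableEq V] (Δ : Finset (Finset V)) {m : ℕ}
    (κ : V → Fin m) (a : Fin m → ℕ) (d : ℕ) (hd : d = ∑ j, a j)
    (hΔ : IsSimplicialComplex Δ) (hbal : IsBalanced Δ κ a)
    (h : (Fin m → ℕ) → ℤ)
    (hh : (∑ b ∈ Finset.Iic a, C (h b) * ∏ j, X j ^ b j : MvPolynomial (Fin m) ℤ)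
        = ∑ F ∈ Δ, (∏ j, X j ^ bvec κ F j) * ∏ j, (1 - X j) ^ (a j - bvec κ F j)) :
    (∑ b ∈ Finset.Iic a, C (h b) * (∏ j, (1 + X j) ^ b j) * ∏ j, X j ^ (a j - b j)
        : MvPolynomial (Fin m) ℤ)
      = ∑ F ∈ Δ, C (mult Δ d F) * ∏ j, X j ^ bvec κ F j := by
  let K := FractionRing (MvPolynomial (Fin m) ℤ)
  let y : Fin m → K := fun j => algebraMap (MvPolynomial (Fin m) ℤ) K (X j)
  have hy : ∀ j, y j ≠ 0 := fun j => IsFractionRing.to_map_ne_zero_of_mem_nonZeroDivisors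
    (mem_nonZeroDivisors_of_ne_zero (X_ne_zero j))
  let subst := aeval (R := ℤ) fun j => (1 + y j) / y j
  have subst_X : ∀ j, subst (X j) = (1 + y j) / y j := aeval_X _
  apply IsFractionRing.injective (MvPolynomial (Fin m) ℤ) K
  calc _ = ∑ b ∈ Iic a, (h b : K) * ((∏ j, ((1 + y j) / y j) ^ b j) * ∏ j, y j ^ a j) := by
        rw [map_sum]
        refine sum_congr rfl fun b hb => ?_
        rw [prod_one_add_div_pow_mul_prod_pow hy (mem_Iic.1 hb)]
        simp only [map_mul, map_prod, map_pow, map_add, map_one, eq_intCast, map_intCast,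
          mul_assoc]
        rfl
    _ = subst (∑ b ∈ Iic a, C (h b) * ∏ j, X j ^ b j) * ∏ j, y j ^ a j := by
        rw [map_sum, sum_mul]
        refine sum_congr rfl fun b _ => ?_
        simp only [map_mul, map_prod, map_pow, subst_X, eq_intCast, map_intCast, mul_assoc]
    _ = ∑ F ∈ Δ, (-1 : K) ^ (d - F.card) * ∏ j, (1 + y j) ^ bvec κ F j := by
        rw [hh, map_sum, sum_mul]
        refine sum_congr rfl fun F hF => ?_
        simp only [map_mul, map_prod, map_pow, map_sub, map_one, subst_X]
        rw [prod_one_add_div_pow_mul_prod_one_sub_pow_mul_prod_pow hy (hbal.bvec_le hF),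
          hbal.sum_sub_bvec hF, hd]
    _ = ∑ F ∈ Δ, (mult Δ d F : K) * ∏ j, y j ^ bvec κ F j :=
        (sum_mult_mul_prod_pow_bvec hΔ κ d y).symm
    _ = _ := by simp [y, map_sum]

/-- The f = h reciprocity for balanced simplicial complexes:
`∑_{b ≤ a} h_b (1+x)^b x^{a−b} = ∑_{F ∈ Δ} m_F x^{b(F)}` in `ℤ[x_1,…,x_m]`. -/
theorem flag_fh_reciprocity {V : Type*} [DecidableEq V] (Δ : Finset (Finset V)) {m : ℕ}
    (hm : 1 ≤ m) (κ : V → Fin m) (a : Fin m → ℕ) (d : ℕ) (hd : d = ∑ j, a j) (hd1 : 1 ≤ d)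
    (hΔ : IsSimplicialComplex Δ) (hbal : IsBalanced Δ κ a)
    (h : (Fin m → ℕ) → ℤ)
    (hh : (∑ b ∈ Finset.Iic a, C (h b) * ∏ j, X j ^ b j : MvPolynomial (Fin m) ℤ)
        = ∑ F ∈ Δ, (∏ j, X j ^ bvec κ F j) * ∏ j, (1 - X j) ^ (a j - bvec κ F j)) :
    (∑ b ∈ Finset.Iic a, C (h b) * (∏ j, (1 + X j) ^ b j) * ∏ j, X j ^ (a j - b j)
        : MvPolynomial (Fin m) ℤ)
      = ∑ F ∈ Δ, C (mult Δ d F) * ∏ j, X j ^ bvec κ F j :=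
  flag_fh_reciprocity_general Δ κ a d hd hΔ hbal h hh
end

section
/- (Sawaske–Xue Dehn–Sommerville relations for completely balanced complexes.) Let Δ be a balanced simplicial complex of type a = (1, 1, …, 1) ∈ ℕ^m (a completely balanced complex) with flag h-numbers (h_b)_{b ≤ a}, and let d = |a| = m. Then for every b ∈ ℕ^m with b ≤ a: h_b − h_{a−b} = (−1)^{|a|−|b|} · ∑_{F ∈ Δ, b(F) ≤ b} ε_F, where ε_F = (−1)^{d−1−|F|}(m_F − 1). -/
open Finset MvPolynomial

lemma negpow_congr {x y : ℕ} (h : x % 2 = y % 2) : (-1:ℤ)^x = (-1)^y := by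
  rw [← Nat.div_add_mod x 2, ← Nat.div_add_mod y 2, h, pow_add, pow_add, pow_mul, pow_mul]
  norm_num

section V
variable {V : Type*} [DecidableEq V] {m : ℕ} (κ : V → Fin m)

lemma bvec_mono {F G : Finset V} (h : F ⊆ G) (j : Fin m) :
    bvec κ F j ≤ bvec κ G j :=
  Finset.card_le_card (Finset.filter_subset_filter _ h)

lemma card_eq_sum_bvec (F : Finset V) : F.card = ∑ j, bvec κ F j :=
  Finset.card_eq_sum_card_fiberwise (fun v _ => Finset.mem_univ (κ v))

lemma bvec_pos {F : Finset V} {v : V} (hv : v ∈ F) : 1 ≤ bvec κ F (κ v) :=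
  Finset.card_pos.mpr ⟨v, Finset.mem_filter.mpr ⟨hv, rfl⟩⟩

end V

lemma coeff_extract {m : ℕ} (a : Fin m → ℕ) (α β : (Fin m → ℕ) → ℤ)
    (hab : (∑ b ∈ Finset.Iic a, C (α b) * ∏ j, X j ^ b j : MvPolynomial (Fin m) ℤ)
         = ∑ b ∈ Finset.Iic a, C (β b) * ∏ j, X j ^ b j) :
    ∀ b ∈ Finset.Iic a, α b = β b := by
  have hmono : ∀ (γ : ℤ) (b : Fin m → ℕ),
      (C γ * ∏ j, X j ^ b j : MvPolynomial (Fin m) ℤ)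
        = monomial (Finsupp.equivFunOnFinite.symm b) γ := by
    intro γ b
    rw [MvPolynomial.monomial_eq]
    congr 1
    rw [Finsupp.prod_fintype _ _ (fun i => pow_zero _)]
    simp
  have key : ∀ (γ : (Fin m → ℕ) → ℤ), ∀ b₀ ∈ Finset.Iic a,
      MvPolynomial.coeff (Finsupp.equivFunOnFinite.symm b₀)
        (∑ b ∈ Finset.Iic a, C (γ b) * ∏ j, X j ^ b j : MvPolynomial (Fin m) ℤ) = γ b₀ := by
    intro γ b₀ hb₀
    rw [MvPolynomial.coeff_sum]
    rw [Finset.sum_eq_single_of_mem b₀ hb₀]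
    · rw [hmono, MvPolynomial.coeff_monomial, if_pos rfl]
    · intro c _ hc
      rw [hmono, MvPolynomial.coeff_monomial, if_neg]
      exact fun hceq => hc (Finsupp.equivFunOnFinite.symm.injective hceq)
  intro b hb
  rw [← key α b hb, ← key β b hb, hab]

lemma factor_expand {m : ℕ} (j : Fin m) {e : ℕ} (he : e ≤ 1) :
    (X j ^ e * (1 - X j) ^ (1 - e) : MvPolynomial (Fin m) ℤ)
      = ∑ n ∈ Finset.Iic 1, C (if e ≤ n then (-1:ℤ)^(n+e) else 0) * X j ^ n := by
  have h01 : (Finset.Iic 1 : Finset ℕ) = {0, 1} := rfl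
  interval_cases e <;> simp [h01] <;> ring

lemma face_expand {m : ℕ} (e : Fin m → ℕ) (he : ∀ j, e j ≤ 1) :
    ((∏ j, X j ^ e j) * ∏ j, (1 - X j) ^ (1 - e j) : MvPolynomial (Fin m) ℤ)
      = ∑ b ∈ Finset.Iic (fun _ => 1 : Fin m → ℕ),
          C (if ∀ j, e j ≤ b j then (-1:ℤ)^(∑ j, (b j + e j)) else 0) * ∏ j, X j ^ b j := by
  have hpi : (Finset.Iic (fun _ => 1 : Fin m → ℕ))
      = Fintype.piFinset (fun _ : Fin m => Finset.Iic 1) := by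
    ext b
    simp [Fintype.mem_piFinset, Finset.mem_Iic, Pi.le_def]
  rw [← Finset.prod_mul_distrib]
  rw [Finset.prod_congr rfl (fun j _ => factor_expand j (he j)), Finset.prod_univ_sum, hpi]
  refine Finset.sum_congr rfl fun b _ => ?_
  rw [Finset.prod_mul_distrib, ← map_prod]
  congr 2
  by_cases hc : ∀ j, e j ≤ b j
  · rw [if_pos hc, Finset.prod_congr rfl (fun j (_ : j ∈ Finset.univ) => if_pos (hc j)),
      Finset.prod_pow_eq_pow_sum]
  · rw [if_neg hc]
    push_neg at hc
    obtain ⟨j₀, hj₀⟩ := hc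
    exact Finset.prod_eq_zero (Finset.mem_univ j₀) (if_neg (by omega))


/-- Sawaske–Xue Dehn–Sommerville relations for completely balanced complexes
(`a = (1,…,1)`, `d = m`): for `b ≤ a`,
`h_b − h_{a−b} = (−1)^{|a|−|b|} ∑_{F ∈ Δ, b(F) ≤ b} ε_F`, with
`ε_F = (−1)^{d−1−|F|}(m_F − 1)`; the sign exponents `∑ a + ∑ b` and `d + 1 + |F|`
have the same parities as `|a| − |b|` and `d − 1 − |F|` respectively. -/
theorem flag_DS_completely_balanced {V : Type*} [DecidableEq V] (Δ : Finset (Finset V))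
    {m : ℕ} (hm : 1 ≤ m) (κ : V → Fin m) (a : Fin m → ℕ) (ha : a = fun _ => 1)
    (d : ℕ) (hd : d = ∑ j, a j)
    (hΔ : IsSimplicialComplex Δ) (hbal : IsBalanced Δ κ a)
    (h : (Fin m → ℕ) → ℤ)
    (hh : (∑ b ∈ Finset.Iic a, C (h b) * ∏ j, X j ^ b j : MvPolynomial (Fin m) ℤ)
        = ∑ F ∈ Δ, (∏ j, X j ^ bvec κ F j) * ∏ j, (1 - X j) ^ (a j - bvec κ F j)) :
    ∀ b : Fin m → ℕ, b ≤ a →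
      h b - h (a - b)
        = (-1 : ℤ) ^ (∑ j, a j + ∑ j, b j)
            * ∑ F ∈ Δ.filter (fun F => ∀ j, bvec κ F j ≤ b j),
                (-1 : ℤ) ^ (d + 1 + F.card) * (mult Δ d F - 1) := by
  subst ha
  intro b hb
  have hdm : d = m := by simpa using hd
  have hbj : ∀ j, b j ≤ 1 := fun j => hb j
  -- every face has at most one vertex of each color
  have hble : ∀ F ∈ Δ, ∀ j, bvec κ F j ≤ 1 := by
    intro F hF j
    obtain ⟨G, hG, hmax⟩ := Finset.exists_max_image (Δ.filter fun G => F ⊆ G) Finset.card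
      ⟨F, Finset.mem_filter.mpr ⟨hF, Finset.Subset.refl F⟩⟩
    rw [Finset.mem_filter] at hG
    have hGmax : ∀ G' ∈ Δ, G ⊆ G' → G' = G := fun G' hG' hsub =>
      (Finset.eq_of_subset_of_card_le hsub
        (hmax G' (Finset.mem_filter.mpr ⟨hG', hG.2.trans hsub⟩))).symm
    have hGb : bvec κ G j = 1 := hbal G hG.1 hGmax j
    have h2 := bvec_mono κ hG.2 j
    omega
  have hcard : ∀ G ∈ Δ, G.card ≤ d := by
    intro G hG
    rw [hdm, card_eq_sum_bvec κ G]
    calc ∑ j, bvec κ G j ≤ ∑ _j : Fin m, 1 := Finset.sum_le_sum fun j _ => hble G hG j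
      _ = m := by simp
  -- the h-number formula
  have hval : ∀ c : Fin m → ℕ, c ≤ (fun _ => 1 : Fin m → ℕ) →
      h c = ∑ F ∈ Δ.filter (fun F => ∀ j, bvec κ F j ≤ c j),
              (-1:ℤ)^(∑ j, c j + F.card) := by
    have hpoly : (∑ c ∈ Finset.Iic (fun _ => 1 : Fin m → ℕ), C (h c) * ∏ j, X j ^ c j
          : MvPolynomial (Fin m) ℤ)
        = ∑ c ∈ Finset.Iic (fun _ => 1 : Fin m → ℕ),
            C (∑ F ∈ Δ, if ∀ j, bvec κ F j ≤ c j
                then (-1:ℤ)^(∑ j, (c j + bvec κ F j)) else 0) * ∏ j, X j ^ c j := by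
      rw [hh]
      calc (∑ F ∈ Δ, (∏ j, X j ^ bvec κ F j)
              * ∏ j, (1 - X j) ^ ((fun _ => 1 : Fin m → ℕ) j - bvec κ F j)
            : MvPolynomial (Fin m) ℤ)
          = ∑ F ∈ Δ, ∑ c ∈ Finset.Iic (fun _ => 1 : Fin m → ℕ),
              C (if ∀ j, bvec κ F j ≤ c j
                  then (-1:ℤ)^(∑ j, (c j + bvec κ F j)) else 0) * ∏ j, X j ^ c j :=
            Finset.sum_congr rfl fun F hF => face_expand (bvec κ F) (hble F hF)
        _ = ∑ c ∈ Finset.Iic (fun _ => 1 : Fin m → ℕ), ∑ F ∈ Δ,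
              C (if ∀ j, bvec κ F j ≤ c j
                  then (-1:ℤ)^(∑ j, (c j + bvec κ F j)) else 0) * ∏ j, X j ^ c j :=
            Finset.sum_comm
        _ = _ := Finset.sum_congr rfl fun c _ => by rw [map_sum, Finset.sum_mul]
    intro c hc
    have step := coeff_extract (fun _ => 1 : Fin m → ℕ) h
      (fun c => ∑ F ∈ Δ, if ∀ j, bvec κ F j ≤ c j
          then (-1:ℤ)^(∑ j, (c j + bvec κ F j)) else 0) hpoly c (Finset.mem_Iic.mpr hc)
    rw [step, Finset.sum_filter]
    refine Finset.sum_congr rfl fun F _ => ?_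
    by_cases hcond : ∀ j, bvec κ F j ≤ c j
    · rw [if_pos hcond, if_pos hcond, Finset.sum_add_distrib, card_eq_sum_bvec κ F]
    · rw [if_neg hcond, if_neg hcond]
  -- abbreviations
  have hab : ∀ j, ((fun _ => 1 : Fin m → ℕ) - b) j = 1 - b j := fun j => rfl
  have hbab : (b : Fin m → ℕ) ≤ (fun _ => 1 : Fin m → ℕ) := hb
  have habab : ((fun _ => 1 : Fin m → ℕ) - b) ≤ (fun _ => 1 : Fin m → ℕ) := by
    intro j; rw [hab j]; exact Nat.sub_le 1 (b j)
  have hsub : ∑ j, ((fun _ => 1 : Fin m → ℕ) - b) j + ∑ j, b j = d := by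
    rw [← Finset.sum_add_distrib]
    calc ∑ j, (((fun _ => 1 : Fin m → ℕ) - b) j + b j) = ∑ _j : Fin m, 1 :=
        Finset.sum_congr rfl fun j _ => by rw [hab j]; have := hbj j; omega
      _ = m := by simp
      _ = d := hdm.symm
  have hSb : ∑ j, b j ≤ d := by omega
  -- the key identity: h (a - b) = ∑_{F ∈ S} (-1)^(Σb+|F|) mult F
  have hfilt : ∀ G ∈ Δ, Δ.filter (fun F => (∀ j, bvec κ F j ≤ b j) ∧ F ⊆ G)
      = (G.filter fun v => b (κ v) = 1).powerset := by
    intro G hG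
    ext F
    simp only [Finset.mem_filter, Finset.mem_powerset]
    constructor
    · rintro ⟨hFΔ, hFb, hFG⟩ v hv
      refine Finset.mem_filter.mpr ⟨hFG hv, ?_⟩
      have h1 := bvec_pos κ hv
      have h2 := hFb (κ v)
      have h3 := hbj (κ v)
      omega
    · intro hFsub
      have hFG : F ⊆ G := hFsub.trans (Finset.filter_subset _ _)
      have hFΔ : F ∈ Δ := hΔ.2 G hG F hFG
      refine ⟨hFΔ, fun j => ?_, hFG⟩
      by_cases hbj1 : b j = 1
      · have := bvec_mono κ hFG j
        have := hble G hG j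
        omega
      · have : F.filter (fun v => κ v = j) = ∅ := by
          refine Finset.filter_eq_empty_iff.mpr fun {v} hv hkv => ?_
          have h1 := (Finset.mem_filter.mp (hFsub hv)).2
          rw [hkv] at h1
          exact hbj1 h1
        simp [bvec, this]
    
  have hQfilt : ∀ G ∈ Δ, ((G.filter fun v => b (κ v) = 1) = ∅
      ↔ ∀ j, bvec κ G j ≤ ((fun _ => 1 : Fin m → ℕ) - b) j) := by
    intro G hG
    constructor
    · intro hemp j
      rw [hab j]
      by_cases hbj1 : b j = 1
      · have hfe : G.filter (fun v => κ v = j) = ∅ := by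
          refine Finset.filter_eq_empty_iff.mpr fun {v} hv hkv => ?_
          have : v ∈ G.filter fun v => b (κ v) = 1 :=
            Finset.mem_filter.mpr ⟨hv, by rw [hkv]; exact hbj1⟩
          rw [hemp] at this
          exact absurd this (Finset.notMem_empty v)
        have : bvec κ G j = 0 := by simp [bvec, hfe]
        omega
      · have := hble G hG j
        have := hbj j
        omega
    · intro hq
      refine Finset.filter_eq_empty_iff.mpr fun {v} hv hbv => ?_
      have h1 := bvec_pos κ hv
      have h2 := hq (κ v)
      rw [hab (κ v)] at h2
      omega
  have hkey : h ((fun _ => 1 : Fin m → ℕ) - b)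
      = ∑ F ∈ Δ.filter (fun F => ∀ j, bvec κ F j ≤ b j),
          (-1:ℤ)^(∑ j, b j + F.card) * mult Δ d F := by
    rw [hval _ habab]
    have e1 : ∑ F ∈ Δ.filter (fun F => ∀ j, bvec κ F j ≤ b j),
          (-1:ℤ)^(∑ j, b j + F.card) * mult Δ d F
        = ∑ F ∈ Δ, ∑ G ∈ Δ, (if (∀ j, bvec κ F j ≤ b j) ∧ F ⊆ G
            then (-1:ℤ)^(∑ j, b j + F.card) * (-1:ℤ)^(d - G.card) else 0) := by
      rw [Finset.sum_filter]
      refine Finset.sum_congr rfl fun F _ => ?_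
      by_cases hPF : ∀ j, bvec κ F j ≤ b j
      · rw [if_pos hPF]
        simp only [mult, Finset.sum_filter, Finset.mul_sum]
        refine Finset.sum_congr rfl fun G _ => ?_
        by_cases hFG : F ⊆ G
        · rw [if_pos hFG, if_pos ⟨hPF, hFG⟩]
        · rw [if_neg hFG, if_neg (fun hc => hFG hc.2), mul_zero]
      · rw [if_neg hPF]
        symm
        exact Finset.sum_eq_zero fun G _ => if_neg (fun hc => hPF hc.1)
    rw [e1, Finset.sum_comm]
    symm
    calc ∑ G ∈ Δ, ∑ F ∈ Δ, (if (∀ j, bvec κ F j ≤ b j) ∧ F ⊆ G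
            then (-1:ℤ)^(∑ j, b j + F.card) * (-1:ℤ)^(d - G.card) else 0)
        = ∑ G ∈ Δ, (if (G.filter fun v => b (κ v) = 1) = ∅
            then (-1:ℤ)^(∑ j, b j) * (-1:ℤ)^(d - G.card) else 0) := by
          refine Finset.sum_congr rfl fun G hG => ?_
          rw [← Finset.sum_filter, hfilt G hG]
          have : ∀ F ∈ (G.filter fun v => b (κ v) = 1).powerset,
              (-1:ℤ)^(∑ j, b j + F.card) * (-1:ℤ)^(d - G.card)
                = (-1:ℤ)^(d - G.card) * ((-1:ℤ)^(∑ j, b j) * (-1:ℤ)^F.card) := by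
            intro F _
            rw [pow_add]
            ring
          rw [Finset.sum_congr rfl this, ← Finset.mul_sum, ← Finset.mul_sum,
            Finset.sum_powerset_neg_one_pow_card]
          split_ifs <;> ring
      _ = ∑ G ∈ Δ.filter (fun G => ∀ j, bvec κ G j ≤ ((fun _ => 1 : Fin m → ℕ) - b) j),
            (-1:ℤ)^(∑ j, b j) * (-1:ℤ)^(d - G.card) := by
          rw [Finset.sum_filter]
          refine Finset.sum_congr rfl fun G hG => ?_
          by_cases hcnd : (G.filter fun v => b (κ v) = 1) = ∅
          · rw [if_pos hcnd, if_pos ((hQfilt G hG).mp hcnd)]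
          · rw [if_neg hcnd, if_neg (fun hc => hcnd ((hQfilt G hG).mpr hc))]
      _ = ∑ G ∈ Δ.filter (fun G => ∀ j, bvec κ G j ≤ ((fun _ => 1 : Fin m → ℕ) - b) j),
            (-1:ℤ)^(∑ j, ((fun _ => 1 : Fin m → ℕ) - b) j + G.card) := by
          refine Finset.sum_congr rfl fun G hG => ?_
          have hGΔ : G ∈ Δ := (Finset.mem_filter.mp hG).1
          have hGc := hcard G hGΔ
          rw [← pow_add]
          exact negpow_congr (by omega)
  rw [hval b hbab, hkey, Finset.mul_sum, ← Finset.sum_sub_distrib]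
  refine Finset.sum_congr rfl fun F _ => ?_
  have h1 : ∑ j, ((fun _ => 1 : Fin m → ℕ) j) = d := hd.symm
  have hsign : (-1:ℤ)^(∑ j, ((fun _ => 1 : Fin m → ℕ) j) + ∑ j, b j) * (-1:ℤ)^(d+1+F.card)
      = -(-1:ℤ)^(∑ j, b j + F.card) := by
    rw [← pow_add,
      show (-(-1:ℤ)^(∑ j, b j + F.card)) = (-1:ℤ)^(∑ j, b j + F.card + 1) from by
        rw [pow_succ]; ring]
    exact negpow_congr (by omega)
  rw [← mul_assoc, hsign]
  ring
end
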